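/- arXiv:1504.01236 — 9 statements merged into one kernel-verified Lean document; each statement's English description precedes it below -/
import Mathlib

section
/- If n ≡ 4 (mod 8) and n ≥ 12, then there exists no pair of quasi-unbiased Hadamard matrices of order n with parameters (4, (n/2)²). -/
/-!
Put `m = n / 2`, so `m ≡ 2 (mod 4)`, and `W = m⁻¹ • H Kᵀ`. Since `4 < n`, the first row `h` of `H`
meets a row `k` of `K` with `⟪h, k⟫ = ±m` and a row `k'` with `⟪h, k'⟫ = 0`; also `⟪k, k'⟫ = 0`.
For three `±1` vectors of length `n` the sum of the three pairwise inner products is `≡ -n`,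
hence `≡ 0 (mod 4)`, which would force `4 ∣ m`.
-/

open Matrix

/-- A Hadamard matrix: all entries are `±1` and `H * Hᵀ = n • 1`. -/
def IsHadamardMatrix {m : Type*} [Fintype m] [DecidableEq m] (H : Matrix m m ℝ) : Prop :=
  (∀ i j, H i j = 1 ∨ H i j = -1) ∧ H * Hᵀ = (Fintype.card m : ℝ) • 1

/-- A weighing matrix of weight `l`: entries in `{0, 1, -1}` and `W * Wᵀ = l • 1`. -/
def IsWeighingMatrix {m : Type*} [Fintype m] [DecidableEq m] (W : Matrix m m ℝ) (l : ℕ) : Prop :=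
  (∀ i j, W i j = 0 ∨ W i j = 1 ∨ W i j = -1) ∧ W * Wᵀ = (l : ℝ) • 1

/-- `H` and `K` are quasi-unbiased Hadamard matrices with parameters `(l, a)`. -/
def QuasiUnbiased {m : Type*} [Fintype m] [DecidableEq m] (H K : Matrix m m ℝ) (l a : ℕ) : Prop :=
  IsHadamardMatrix H ∧ IsHadamardMatrix K ∧
    IsWeighingMatrix ((Real.sqrt (a : ℝ))⁻¹ • (H * Kᵀ)) l

section SignVectors

variable {R : Type*} [CommRing R]

theorem exists_int_mul_add_mul_add_mul_eq {a b c : R} (ha : a = 1 ∨ a = -1)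
    (hb : b = 1 ∨ b = -1) (hc : c = 1 ∨ c = -1) :
    ∃ k : ℤ, a * b + a * c + b * c = 4 * k - 1 := by
  rcases ha with rfl | rfl <;> rcases hb with rfl | rfl <;> rcases hc with rfl | rfl
  all_goals first
    | (refine ⟨1, ?_⟩; push_cast; ring1)
    | (refine ⟨0, ?_⟩; push_cast; ring1)

theorem exists_int_dotProduct_add_dotProduct_add_dotProduct_eq {ι : Type*} [Fintype ι]
    {x y z : ι → R} (hx : ∀ i, x i = 1 ∨ x i = -1) (hy : ∀ i, y i = 1 ∨ y i = -1)
    (hz : ∀ i, z i = 1 ∨ z i = -1) :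
    ∃ k : ℤ, x ⬝ᵥ y + x ⬝ᵥ z + y ⬝ᵥ z = 4 * k - Fintype.card ι := by
  choose k hk using fun i => exists_int_mul_add_mul_add_mul_eq (hx i) (hy i) (hz i)
  refine ⟨∑ i, k i, ?_⟩
  simp only [dotProduct, ← Finset.sum_add_distrib, hk, Finset.sum_sub_distrib,
    Finset.sum_const, Finset.card_univ, nsmul_one, Int.cast_sum, Finset.mul_sum]

end SignVectors

section Rows

variable {m : Type*} [Fintype m] [DecidableEq m]

theorem IsHadamardMatrix.dotProduct_row_eq_zero {H : Matrix m m ℝ} (hH : IsHadamardMatrix H)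
    {i j : m} (hij : i ≠ j) : H i ⬝ᵥ H j = 0 := by
  change (H * Hᵀ) i j = 0
  simpa [hij] using congrFun (congrFun hH.2 i) j

theorem IsWeighingMatrix.dotProduct_row_self {W : Matrix m m ℝ} {l : ℕ}
    (hW : IsWeighingMatrix W l) (i : m) : W i ⬝ᵥ W i = l := by
  change (W * Wᵀ) i i = l
  simpa using congrFun (congrFun hW.2 i) i

theorem IsWeighingMatrix.exists_row_ne_zero {W : Matrix m m ℝ} {l : ℕ}
    (hW : IsWeighingMatrix W l) (hl : l ≠ 0) (i : m) : ∃ j, W i j ≠ 0 := by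
  by_contra! h
  have := hW.dotProduct_row_self i
  simp only [dotProduct, h, mul_zero, Finset.sum_const_zero] at this
  exact hl (by exact_mod_cast this.symm)

theorem IsWeighingMatrix.exists_row_eq_zero {W : Matrix m m ℝ} {l : ℕ}
    (hW : IsWeighingMatrix W l) (hl : l < Fintype.card m) (i : m) : ∃ j, W i j = 0 := by
  by_contra! h
  have hsq : ∀ j, W i j * W i j = 1 := fun j => by
    rcases hW.1 i j with h0 | h0 | h0
    · exact absurd h0 (h j)
    all_goals rw [h0]; norm_num
  have := hW.dotProduct_row_self i
  simp only [dotProduct, hsq, Finset.sum_const, Finset.card_univ, nsmul_one] at this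
  exact hl.ne' (by exact_mod_cast this)

end Rows

theorem stmt_3 (n : ℕ) (h1 : n % 8 = 4) (h2 : 12 ≤ n) :
    ¬ ∃ H K : Matrix (Fin n) (Fin n) ℝ, QuasiUnbiased H K 4 ((n / 2) ^ 2) := by
  rintro ⟨H, K, hH, hK, hW⟩
  set m := n / 2
  have hm : (m : ℝ) ≠ 0 := Nat.cast_ne_zero.mpr (by omega)
  rw [Nat.cast_pow, Real.sqrt_sq m.cast_nonneg] at hW
  set W := (m : ℝ)⁻¹ • (H * Kᵀ)
  have hHK (a b : Fin n) : H a ⬝ᵥ K b = m * W a b := by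
    rw [show W a b = (m : ℝ)⁻¹ * (H a ⬝ᵥ K b) from rfl, mul_inv_cancel_left₀ hm]
  let i : Fin n := ⟨0, by omega⟩
  obtain ⟨v, hv⟩ := hW.exists_row_ne_zero four_ne_zero i
  obtain ⟨w, hw⟩ := hW.exists_row_eq_zero (by rw [Fintype.card_fin]; omega) i
  have hvw : v ≠ w := fun h => hv (h ▸ hw)
  obtain ⟨k, hk⟩ := exists_int_dotProduct_add_dotProduct_add_dotProduct_eq
    (hH.1 i) (hK.1 v) (hK.1 w)
  rw [hHK, hHK, hw, hK.dotProduct_row_eq_zero hvw, Fintype.card_fin] at hk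
  have hn : (n : ℝ) = 2 * m := by exact_mod_cast (Nat.mul_div_cancel' (by omega : 2 ∣ n)).symm
  rcases (hW.1 i v).resolve_left hv with hs | hs <;> rw [hs, hn] at hk
  · have : (3 * m : ℤ) = 4 * k := by exact_mod_cast (by linarith : (3 * m : ℝ) = 4 * k)
    omega
  · have : (m : ℤ) = 4 * k := by exact_mod_cast (by linarith : (m : ℝ) = 4 * k)
    omega
end

section
/- If {H_1,…,H_f} is a set of f mutually quasi-unbiased Hadamard matrices of order n with parameters (l,a), and {K_1,…,K_f} is a set of f mutually quasi-unbiased Hadamard matrices of order n' with parameters (l',a'), then {H_1⊗K_1, …, H_f⊗K_f} is a set of f mutually quasi-unbiased Hadamard matrices of order nn' with parameters (ll', aa'). -/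
open Matrix

open Kronecker

lemma kron_mul_transpose {n n' : ℕ} (A C : Matrix (Fin n) (Fin n) ℝ)
    (B D : Matrix (Fin n') (Fin n') ℝ) :
    (A ⊗ₖ B) * (C ⊗ₖ D)ᵀ = (A * Cᵀ) ⊗ₖ (B * Dᵀ) := by
  rw [← kroneckerMap_transpose, mul_kronecker_mul]

lemma had_kron {n n' : ℕ} {A : Matrix (Fin n) (Fin n) ℝ} {B : Matrix (Fin n') (Fin n') ℝ}
    (hA : IsHadamardMatrix A) (hB : IsHadamardMatrix B) :
    IsHadamardMatrix (A ⊗ₖ B) := by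
  constructor
  · rintro ⟨i, k⟩ ⟨j, m⟩
    rcases hA.1 i j with h1 | h1 <;> rcases hB.1 k m with h2 | h2 <;>
      simp [kroneckerMap_apply, h1, h2]
  · rw [kron_mul_transpose, hA.2, hB.2, smul_kronecker, kronecker_smul, one_kronecker_one,
      smul_smul]
    simp [Fintype.card_prod]

lemma weigh_kron {n n' : ℕ} {A : Matrix (Fin n) (Fin n) ℝ} {B : Matrix (Fin n') (Fin n') ℝ}
    {l l' : ℕ} (hA : IsWeighingMatrix A l) (hB : IsWeighingMatrix B l') :
    IsWeighingMatrix (A ⊗ₖ B) (l * l') := by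
  constructor
  · rintro ⟨i, k⟩ ⟨j, m⟩
    rcases hA.1 i j with h1 | h1 | h1 <;> rcases hB.1 k m with h2 | h2 | h2 <;>
      simp [kroneckerMap_apply, h1, h2]
  · rw [kron_mul_transpose, hA.2, hB.2, smul_kronecker, kronecker_smul, one_kronecker_one,
      smul_smul]
    push_cast
    ring_nf

theorem stmt_5 (f n n' l a l' a' : ℕ)
    (H : Fin f → Matrix (Fin n) (Fin n) ℝ) (K : Fin f → Matrix (Fin n') (Fin n') ℝ)
    (hH : ∀ i, IsHadamardMatrix (H i)) (hK : ∀ i, IsHadamardMatrix (K i))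
    (hHq : ∀ i j, i ≠ j → QuasiUnbiased (H i) (H j) l a)
    (hKq : ∀ i j, i ≠ j → QuasiUnbiased (K i) (K j) l' a') :
    (∀ i, IsHadamardMatrix (H i ⊗ₖ K i)) ∧
      ∀ i j, i ≠ j → QuasiUnbiased (H i ⊗ₖ K i) (H j ⊗ₖ K j) (l * l') (a * a') := by
  refine ⟨fun i => had_kron (hH i) (hK i), fun i j hij => ?_⟩
  refine ⟨had_kron (hH i) (hK i), had_kron (hH j) (hK j), ?_⟩
  have hW : (Real.sqrt ((a * a' : ℕ) : ℝ))⁻¹ • ((H i ⊗ₖ K i) * (H j ⊗ₖ K j)ᵀ)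
      = ((Real.sqrt (a : ℝ))⁻¹ • (H i * (H j)ᵀ)) ⊗ₖ ((Real.sqrt (a' : ℝ))⁻¹ • (K i * (K j)ᵀ)) := by
    rw [kron_mul_transpose, smul_kronecker, kronecker_smul, smul_smul]
    congr 1
    rw [Nat.cast_mul, Real.sqrt_mul (by positivity), mul_inv]
  rw [hW]
  exact weigh_kron (hHq i j hij).2.2 (hKq i j hij).2.2
end

section
/- Let C be a binary self-complementary code of length n whose set of occurring nonzero distances is {n/2−α, n/2, n/2+α, n} for some integer α with 0 < α < n/2. Then |C| ≤ n(n² − 3n + 8)/3, and if equality holds then 4α² = 3n − 8. -/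
/-!
Keeping the codewords whose first coordinate is `0` halves `C` (it is closed under complement)
and removes the distance `n`. Since the distance `n - (n / 2 - α)` to a complement must occur
too, `n` is even, so for distinct words `x, y` of the half `D` the correlation
`⟨x, y⟩ = ∑ᵢ (-1) ^ (xᵢ + yᵢ) = n - 2 d(x, y)` lies in `{2α, 0, -2α}`. Hence the functions
`F_x = ⟨x, ·⟩ ^ 3 - 4α² ⟨x, ·⟩`, `x ∈ D`, vanish at every other word of `D` and take the value
`n³ - 4α²n ≠ 0` at `x`, so they are linearly independent. Expanding the cube with `(±1)² = 1`
puts every `F_x` in the span of the Walsh characters `χ_S` with `|S| ∈ {1, 3}`, whence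
`|C| = 2|D| ≤ 2 (n + C(n, 3)) = n (n² - 3n + 8) / 3`.

In the case of equality the `F_x` span that whole space, so for `|T| = 3` we can write
`χ_T = ∑ₓ χ_T(x) / (n³ - 4α²n) • F_x`. Pairing with `χ_T`, whose coefficient in `F_x` is
`6 χ_T(x)`, gives `n³ - 4α²n = 6|D| = n (n² - 3n + 8)`, that is `4α² = 3n - 8`.
-/

open Finset

def bitSign (a : ZMod 2) : ℝ := (-1) ^ a.val

lemma bitSign_add (a b : ZMod 2) : bitSign (a + b) = bitSign a * bitSign b := by
  rw [bitSign, bitSign, bitSign, ← pow_add, neg_one_pow_eq_pow_mod_two (a.val + b.val),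
    ZMod.val_add]

lemma bitSign_mul_self (a : ZMod 2) : bitSign a * bitSign a = 1 := by
  rw [← bitSign_add, CharTwo.add_self_eq_zero]; simp [bitSign]

lemma sum_bitSign : ∑ a : ZMod 2, bitSign a = 0 := by
  rw [show (univ : Finset (ZMod 2)) = {0, 1} from rfl, sum_pair (by decide)]
  simp [bitSign, ZMod.val_one]

lemma bitSign_mul_bitSign (a b : ZMod 2) : bitSign a * bitSign b = if a = b then 1 else -1 := by
  rcases (by decide : ∀ c : ZMod 2, c = 0 ∨ c = 1) a with rfl | rfl <;>
  rcases (by decide : ∀ c : ZMod 2, c = 0 ∨ c = 1) b with rfl | rfl <;>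
    norm_num [bitSign, ZMod.val_one]

section Walsh

variable {ι : Type*}

def walsh (S : Finset ι) (z : ι → ZMod 2) : ℝ := ∏ i ∈ S, bitSign (z i)

lemma walsh_mul_self (S : Finset ι) (z : ι → ZMod 2) : walsh S z * walsh S z = 1 := by
  rw [walsh, ← prod_mul_distrib]
  exact prod_eq_one fun i _ => bitSign_mul_self _

lemma walsh_dotProduct_walsh [Fintype ι] [DecidableEq ι] (S T : Finset ι) :
    walsh S ⬝ᵥ walsh T = if S = T then 2 ^ Fintype.card ι else 0 := by
  have hfactor : ∀ i, ∑ a : ZMod 2,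
      (if i ∈ S then bitSign a else 1) * (if i ∈ T then bitSign a else 1) =
        if (i ∈ S ↔ i ∈ T) then 2 else 0 := by
    intro i
    by_cases hS : i ∈ S <;> by_cases hT : i ∈ T <;>
      simp [hS, hT, bitSign_mul_self, sum_bitSign]
  calc walsh S ⬝ᵥ walsh T
      = ∑ z : ι → ZMod 2, ∏ i, (if i ∈ S then bitSign (z i) else 1) *
          (if i ∈ T then bitSign (z i) else 1) := by
        simp only [dotProduct, walsh, prod_mul_distrib, prod_ite_mem, univ_inter]
    _ = ∏ i, if (i ∈ S ↔ i ∈ T) then (2 : ℝ) else 0 := by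
        rw [← Fintype.prod_sum (fun i (a : ZMod 2) => (if i ∈ S then bitSign a else 1) *
          (if i ∈ T then bitSign a else 1))]
        simp only [hfactor]
    _ = _ := by simp [Finset.prod_ite_zero, ← Finset.ext_iff]

end Walsh

section SymmetricPowers

variable {ι R : Type*} [DecidableEq ι] [CommRing R]

lemma sum_powersetCard_succ_insert (u : ι → R) {a : ι} {s : Finset ι} (ha : a ∉ s) (k : ℕ) :
    ∑ S ∈ (insert a s).powersetCard (k + 1), ∏ i ∈ S, u i =
      ∑ S ∈ s.powersetCard (k + 1), ∏ i ∈ S, u i + u a * ∑ S ∈ s.powersetCard k, ∏ i ∈ S, u i := by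
  have hdisj : Disjoint (s.powersetCard (k + 1)) ((s.powersetCard k).image (insert a)) := by
    simp only [disjoint_left, mem_image, mem_powersetCard, not_exists, not_and]
    intro S hS T _ hTS
    exact ha (hS.1 (hTS ▸ mem_insert_self a T))
  have hinj : Set.InjOn (insert a) (s.powersetCard k : Set (Finset ι)) := fun S hS T hT hST => by
    rw [mem_coe, mem_powersetCard] at hS hT
    rw [← erase_insert (fun h => ha (hS.1 h)), hST, erase_insert (fun h => ha (hT.1 h))]
  rw [powersetCard_succ_insert ha, sum_union hdisj, sum_image hinj, mul_sum]
  refine congrArg _ (sum_congr rfl fun S hS => prod_insert fun h => ha ?_)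
  exact (mem_powersetCard.1 hS).1 h

variable (u : ι → R) (s : Finset ι)

lemma sq_sum_of_sq_eq_one (hu : ∀ i ∈ s, u i ^ 2 = 1) :
    (∑ i ∈ s, u i) ^ 2 = #s + 2 * ∑ S ∈ s.powersetCard 2, ∏ i ∈ S, u i := by
  induction s using Finset.induction_on with
  | empty => rw [powersetCard_eq_empty.2 (by simp)]; simp
  | insert a s ha ih =>
    rw [sum_insert ha, sum_powersetCard_succ_insert u ha 1, powersetCard_one, sum_map,
      card_insert_of_notMem ha, add_sq, ih fun i hi => hu i (mem_insert_of_mem hi),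
      hu a (mem_insert_self a s)]
    simp only [Function.Embedding.coeFn_mk, prod_singleton, Nat.cast_succ]
    ring

lemma pow_three_sum_of_sq_eq_one (hu : ∀ i ∈ s, u i ^ 2 = 1) :
    (∑ i ∈ s, u i) ^ 3 =
      (3 * #s - 2) * ∑ i ∈ s, u i + 6 * ∑ S ∈ s.powersetCard 3, ∏ i ∈ S, u i := by
  induction s using Finset.induction_on with
  | empty => rw [powersetCard_eq_empty.2 (by simp)]; simp
  | insert a s ha ih =>
    have hs : ∀ i ∈ s, u i ^ 2 = 1 := fun i hi => hu i (mem_insert_of_mem hi)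
    have ha2 : u a ^ 2 = 1 := hu a (mem_insert_self a s)
    have hcube : (u a + ∑ i ∈ s, u i) ^ 3 = u a ^ 2 * u a + 3 * u a ^ 2 * ∑ i ∈ s, u i +
        3 * u a * (∑ i ∈ s, u i) ^ 2 + (∑ i ∈ s, u i) ^ 3 := by ring
    rw [sum_insert ha, sum_powersetCard_succ_insert u ha 2, card_insert_of_notMem ha, hcube, ha2,
      sq_sum_of_sq_eq_one u s hs, ih hs]
    push_cast
    ring

end SymmetricPowers

section Interpolation

variable {K X ι : Type*} [Field K] [Fintype ι] [DecidableEq ι]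
  {f : ι → X → K} {p : ι → X} {L : K}

lemma sum_smul_apply_of_apply_eq_ite (hf : ∀ i j, f i (p j) = if i = j then L else 0)
    (c : ι → K) (j : ι) : (∑ i, c i • f i) (p j) = c j * L := by
  simp [Finset.sum_apply, hf]

lemma linearIndependent_of_apply_eq_ite (hL : L ≠ 0)
    (hf : ∀ i j, f i (p j) = if i = j then L else 0) : LinearIndependent K f := by
  refine Fintype.linearIndependent_iff.2 fun c hc j => ?_
  have := sum_smul_apply_of_apply_eq_ite hf c j
  rw [hc, Pi.zero_apply, eq_comm, mul_eq_zero] at this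
  exact this.resolve_right hL

lemma eq_sum_of_mem_span_of_apply_eq_ite (hL : L ≠ 0)
    (hf : ∀ i j, f i (p j) = if i = j then L else 0) {g : X → K}
    (hg : g ∈ Submodule.span K (Set.range f)) : g = ∑ i, (g (p i) / L) • f i := by
  obtain ⟨c, rfl⟩ := (Submodule.mem_span_range_iff_exists_fun K).1 hg
  simp_rw [sum_smul_apply_of_apply_eq_ite hf, mul_div_cancel_right₀ _ hL]

end Interpolation

section Correlation

variable {ι : Type*} [Fintype ι]

def correlation (x z : ι → ZMod 2) : ℝ := ∑ i, bitSign (x i) * bitSign (z i)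

lemma correlation_eq (x z : ι → ZMod 2) :
    correlation x z = Fintype.card ι - 2 * hammingDist x z := by
  have hterm : ∀ i, bitSign (x i) * bitSign (z i) = 1 - 2 * if x i ≠ z i then 1 else 0 := by
    intro i
    by_cases h : x i = z i <;> norm_num [bitSign_mul_bitSign, h]
  simp only [correlation, hterm, sum_sub_distrib, ← mul_sum, sum_boole, hammingDist]
  simp

lemma correlation_self (x : ι → ZMod 2) : correlation x x = Fintype.card ι := by
  simp [correlation_eq]

def cubicKernel (a : ℝ) (x z : ι → ZMod 2) : ℝ := correlation x z ^ 3 - a ^ 2 * correlation x z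

lemma cubicKernel_self (a : ℝ) (x : ι → ZMod 2) :
    cubicKernel a x x = (Fintype.card ι : ℝ) ^ 3 - a ^ 2 * Fintype.card ι := by
  rw [cubicKernel, correlation_self]

lemma cubicKernel_eq_zero_of_correlation {a : ℝ} {x y : ι → ZMod 2}
    (h : correlation x y = a ∨ correlation x y = 0 ∨ correlation x y = -a) :
    cubicKernel a x y = 0 := by
  rcases h with h | h | h <;> simp only [cubicKernel, h] <;> ring

lemma cubicKernel_eq_sum (a : ℝ) (x : ι → ZMod 2) :
    cubicKernel a x = (3 * Fintype.card ι - 2 - a ^ 2) • ∑ i, walsh {i} x • walsh {i} +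
      (6 : ℝ) • ∑ S ∈ univ.powersetCard 3, walsh S x • walsh S := by
  classical
  funext z
  have hu : ∀ i ∈ univ, (bitSign (x i) * bitSign (z i)) ^ 2 = 1 := fun i _ => by
    rw [mul_pow, sq, sq, bitSign_mul_self, bitSign_mul_self, one_mul]
  simp only [cubicKernel, correlation, pow_three_sum_of_sq_eq_one _ _ hu, Pi.add_apply,
    Pi.smul_apply, Finset.sum_apply, smul_eq_mul, walsh, prod_singleton, prod_mul_distrib,
    card_univ]
  ring

end Correlation

section WalshSpan

variable {ι : Type*} [Fintype ι]

def walshSpan (𝒜 : Finset (Finset ι)) : Submodule ℝ ((ι → ZMod 2) → ℝ) :=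
  Submodule.span ℝ (walsh '' 𝒜)

lemma finrank_walshSpan_le (𝒜 : Finset (Finset ι)) :
    Module.finrank ℝ (walshSpan 𝒜) ≤ #𝒜 := by
  classical
  rw [walshSpan, ← coe_image]
  exact (finrank_span_finset_le_card _).trans card_image_le

variable [DecidableEq ι]

lemma card_powersetCard_one_union_three_le :
    #(univ.powersetCard 1 ∪ univ.powersetCard 3 : Finset (Finset ι)) ≤
      Fintype.card ι + (Fintype.card ι).choose 3 := by
  refine (card_union_le _ _).trans ?_
  rw [card_powersetCard, card_powersetCard, card_univ, Nat.choose_one_right]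

lemma cubicKernel_mem_walshSpan (a : ℝ) (x : ι → ZMod 2) :
    cubicKernel a x ∈ walshSpan (univ.powersetCard 1 ∪ univ.powersetCard 3) := by
  rw [cubicKernel_eq_sum]
  refine add_mem (Submodule.smul_mem _ _ (sum_mem fun i _ => Submodule.smul_mem _ _ ?_))
    (Submodule.smul_mem _ _ (sum_mem fun S hS => Submodule.smul_mem _ _ ?_))
  · exact Submodule.subset_span ⟨{i}, by simp, rfl⟩
  · exact Submodule.subset_span ⟨S, mem_union_right _ hS, rfl⟩

lemma walsh_dotProduct_cubicKernel {T : Finset ι} (hT : #T = 3) (a : ℝ)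
    (x : ι → ZMod 2) : walsh T ⬝ᵥ cubicKernel a x = 6 * 2 ^ Fintype.card ι * walsh T x := by
  have hsingle : ∀ i, T ≠ {i} := fun i h => by simp [h] at hT
  rw [cubicKernel_eq_sum]
  simp only [dotProduct_add, dotProduct_smul, dotProduct_sum, walsh_dotProduct_walsh, hsingle,
    if_false, smul_eq_mul, mul_zero, sum_const_zero, mul_ite, sum_ite_eq, mem_powersetCard,
    subset_univ, hT, and_self, if_true, zero_add]
  ring

end WalshSpan

lemma pow_three_sub_sq_mul_ne_zero {n : ℕ} {a : ℝ} (ha : |a| < n) :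
    (n : ℝ) ^ 3 - a ^ 2 * n ≠ 0 := by
  obtain ⟨h₁, h₂⟩ := abs_lt.1 ha
  rw [show (n : ℝ) ^ 3 - a ^ 2 * n = n * ((n - a) * (n + a)) by ring]
  exact (mul_pos (by linarith) (mul_pos (by linarith) (by linarith))).ne'

section CubicKernelDesign

variable {ι : Type*} [Fintype ι] {D : Finset (ι → ZMod 2)} {a : ℝ}

lemma span_cubicKernel_le [DecidableEq ι] :
    Submodule.span ℝ (Set.range fun x : D => cubicKernel a (x : ι → ZMod 2)) ≤
      walshSpan (univ.powersetCard 1 ∪ univ.powersetCard 3) :=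
  Submodule.span_le.2 <| Set.range_subset_iff.2 fun x =>
    cubicKernel_mem_walshSpan a (x : ι → ZMod 2)

lemma cubicKernel_apply_eq_ite (hD : ∀ x ∈ D, ∀ y ∈ D, x ≠ y → cubicKernel a x y = 0)
    (x y : D) : cubicKernel a (x : ι → ZMod 2) y =
      if x = y then (Fintype.card ι : ℝ) ^ 3 - a ^ 2 * Fintype.card ι else 0 := by
  split_ifs with h
  · rw [h, cubicKernel_self]
  · exact hD x x.2 y y.2 (Subtype.coe_ne_coe.2 h)

lemma finrank_span_cubicKernel (hD : ∀ x ∈ D, ∀ y ∈ D, x ≠ y → cubicKernel a x y = 0)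
    (ha : |a| < Fintype.card ι) :
    Module.finrank ℝ (Submodule.span ℝ (Set.range fun x : D => cubicKernel a (x : ι → ZMod 2))) =
      #D := by
  rw [finrank_span_eq_card (linearIndependent_of_apply_eq_ite (pow_three_sub_sq_mul_ne_zero ha)
    (cubicKernel_apply_eq_ite hD)), Fintype.card_coe]

variable [DecidableEq ι]

lemma card_le_of_cubicKernel_eq_zero (hD : ∀ x ∈ D, ∀ y ∈ D, x ≠ y → cubicKernel a x y = 0)
    (ha : |a| < Fintype.card ι) : #D ≤ Fintype.card ι + (Fintype.card ι).choose 3 :=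
  calc #D = _ := (finrank_span_cubicKernel hD ha).symm
    _ ≤ _ := Submodule.finrank_mono span_cubicKernel_le
    _ ≤ _ := finrank_walshSpan_le _
    _ ≤ _ := card_powersetCard_one_union_three_le

lemma eq_six_mul_card_of_cubicKernel_eq_zero
    (hD : ∀ x ∈ D, ∀ y ∈ D, x ≠ y → cubicKernel a x y = 0)
    (ha : |a| < Fintype.card ι) (h3 : 3 ≤ Fintype.card ι)
    (hcard : #D = Fintype.card ι + (Fintype.card ι).choose 3) :
    (Fintype.card ι : ℝ) ^ 3 - a ^ 2 * Fintype.card ι = 6 * #D := by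
  set L := (Fintype.card ι : ℝ) ^ 3 - a ^ 2 * Fintype.card ι
  have hL : L ≠ 0 := pow_three_sub_sq_mul_ne_zero ha
  set K := (2 : ℝ) ^ Fintype.card ι
  set V := Submodule.span ℝ (Set.range fun x : D => cubicKernel a (x : ι → ZMod 2))
  have hspan : V = walshSpan (univ.powersetCard 1 ∪ univ.powersetCard 3) := by
    refine Submodule.eq_of_le_of_finrank_le span_cubicKernel_le ?_
    rw [finrank_span_cubicKernel hD ha, hcard]
    exact (finrank_walshSpan_le _).trans card_powersetCard_one_union_three_le
  obtain ⟨T, -, hT⟩ := exists_subset_card_eq (s := (univ : Finset ι)) (by simpa using h3)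
  have hTmem : walsh T ∈ V := hspan ▸
    Submodule.subset_span ⟨T, mem_union_right _ (mem_powersetCard.2 ⟨subset_univ T, hT⟩), rfl⟩
  have hexpand := eq_sum_of_mem_span_of_apply_eq_ite hL (cubicKernel_apply_eq_ite hD) hTmem
  have hK : K = #D * (6 * K / L) :=
    calc K = walsh T ⬝ᵥ walsh T := by simp [K, walsh_dotProduct_walsh]
      _ = ∑ x : D, walsh T x / L * (6 * K * walsh T x) := by
        nth_rewrite 2 [hexpand]
        simp [dotProduct_sum, dotProduct_smul, walsh_dotProduct_cubicKernel hT, K]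
      _ = ∑ _x : D, 6 * K / L := sum_congr rfl fun x _ => by
        rw [div_mul_eq_mul_div, mul_left_comm, walsh_mul_self, mul_one]
      _ = #D * (6 * K / L) := by rw [sum_const, card_univ, Fintype.card_coe, nsmul_eq_mul]
  have hK0 : K ≠ 0 := by positivity
  field_simp at hK
  linarith

end CubicKernelDesign

lemma six_mul_add_choose_three {K : Type*} [Field K] [CharZero K] (n : ℕ) :
    6 * ((n : K) + n.choose 3) = n * (n ^ 2 - 3 * n + 8) := by
  rw [Nat.cast_choose_eq_descPochhammer_div]
  simp only [descPochhammer_succ_right, descPochhammer_zero, Polynomial.eval_mul,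
    Polynomial.eval_X, Polynomial.eval_sub, Polynomial.eval_one, Polynomial.eval_natCast,
    Nat.factorial]
  push_cast
  ring

section Codes

variable {ι : Type*}

def distanceSet [Fintype ι] {β : ι → Type*} [∀ i, DecidableEq (β i)] (C : Finset (∀ i, β i)) :
    Set ℕ :=
  {d | ∃ x ∈ C, ∃ y ∈ C, x ≠ y ∧ hammingDist x y = d}

lemma hammingDist_lt_card_of_apply_eq [Fintype ι] {β : ι → Type*} [∀ i, DecidableEq (β i)]
    {x y : ∀ i, β i} {i : ι} (h : x i = y i) : hammingDist x y < Fintype.card ι :=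
  card_lt_card (filter_ssubset.2 ⟨i, mem_univ i, not_not.2 h⟩)

lemma hammingDist_add_one [Fintype ι] (x y : ι → ZMod 2) :
    hammingDist x (y + 1) = Fintype.card ι - hammingDist x y := by
  have hbit : ∀ a b : ZMod 2, a ≠ b + 1 ↔ ¬a ≠ b := by decide
  have hsplit := card_filter_add_card_filter_not (s := (univ : Finset ι)) (fun i => x i ≠ y i)
  rw [hammingDist, hammingDist, ← card_univ, ← hsplit, Nat.add_sub_cancel_left]
  congr 1
  ext i
  simp [hbit]

lemma two_mul_card_filter_apply_eq_zero {C : Finset (ι → ZMod 2)} (hsc : ∀ x ∈ C, x + 1 ∈ C)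
    (i : ι) : 2 * #(C.filter (· i = 0)) = #C := by
  have hflip : ∀ a : ZMod 2, a ≠ 0 → a + 1 = 0 := by decide
  have hinv : ∀ x : ι → ZMod 2, x + 1 + 1 = x := fun x => by
    ext j
    simp only [Pi.add_apply, Pi.one_apply, add_assoc, CharTwo.add_self_eq_zero, add_zero]
  have hswap : #(C.filter (· i = 0)) = #(C.filter (¬ · i = 0)) :=
    card_nbij' (· + 1) (· + 1) (fun x hx => by simp_all) (fun x hx => by simp_all)
      (fun x _ => hinv x) (fun x _ => hinv x)
  rw [two_mul]
  nth_rewrite 2 [hswap]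
  exact card_filter_add_card_filter_not _

variable {n α : ℕ} {C : Finset (Fin n → ZMod 2)}

lemma even_of_distanceSet_eq (hsc : ∀ x ∈ C, x + 1 ∈ C) (hα : α < n / 2)
    (hdist : distanceSet C = {n / 2 - α, n / 2, n / 2 + α, n}) : Even n := by
  obtain ⟨x, hx, y, hy, -, hd⟩ : n / 2 - α ∈ distanceSet C := by simp [hdist]
  have hx' : x ≠ y + 1 := by
    rintro rfl
    rw [hammingDist_comm, hammingDist_add_one, hammingDist_self, Fintype.card_fin] at hd
    omega
  have hmem : hammingDist x (y + 1) ∈ distanceSet C := ⟨x, hx, y + 1, hsc y hy, hx', rfl⟩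
  rw [hdist, hammingDist_add_one, hd, Fintype.card_fin] at hmem
  simp only [Set.mem_insert_iff, Set.mem_singleton_iff] at hmem
  rw [Nat.even_iff]
  omega

lemma cubicKernel_eq_zero_of_distanceSet_subset (heven : Even n) (hα : α ≤ n / 2)
    (hdist : distanceSet C ⊆ {n / 2 - α, n / 2, n / 2 + α, n})
    {x y : Fin n → ZMod 2} (hx : x ∈ C) (hy : y ∈ C) (hxy : x ≠ y) {i : Fin n} (hi : x i = y i) :
    cubicKernel (2 * α) x y = 0 := by
  obtain ⟨m, rfl⟩ := heven
  have hd := hdist ⟨x, hx, y, hy, hxy, rfl⟩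
  have hlt := hammingDist_lt_card_of_apply_eq hi
  rw [show (m + m) / 2 = m by omega] at hd hα
  rw [Fintype.card_fin] at hlt
  apply cubicKernel_eq_zero_of_correlation
  simp only [Set.mem_insert_iff, Set.mem_singleton_iff] at hd
  rw [correlation_eq, Fintype.card_fin]
  rcases hd with hd | hd | hd | hd
  · left; rw [hd, Nat.cast_sub hα]; push_cast; ring
  · right; left; rw [hd]; push_cast; ring
  · right; right; rw [hd]; push_cast; ring
  · omega

lemma exists_half_cubicKernel_eq_zero (hsc : ∀ x ∈ C, x + 1 ∈ C) (hα : α < n / 2)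
    (hdist : distanceSet C = {n / 2 - α, n / 2, n / 2 + α, n}) :
    ∃ D : Finset (Fin n → ZMod 2), 2 * #D = #C ∧
      ∀ x ∈ D, ∀ y ∈ D, x ≠ y → cubicKernel (2 * α) x y = 0 := by
  refine ⟨C.filter (· ⟨0, by omega⟩ = 0), two_mul_card_filter_apply_eq_zero hsc _,
    fun x hx y hy hxy => ?_⟩
  rw [mem_filter] at hx hy
  exact cubicKernel_eq_zero_of_distanceSet_subset (even_of_distanceSet_eq hsc hα hdist) hα.le
    hdist.le hx.1 hy.1 hxy (hx.2.trans hy.2.symm)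

end Codes

theorem stmt_10 (n α : ℕ) (hα1 : 0 < α) (hα2 : α < n / 2)
    (C : Finset (Fin n → ZMod 2))
    (hsc : ∀ x ∈ C, x + 1 ∈ C)
    (hdist : {i : ℕ | ∃ x ∈ C, ∃ y ∈ C, x ≠ y ∧ hammingDist x y = i} =
      {n / 2 - α, n / 2, n / 2 + α, n}) :
    3 * (C.card : ℤ) ≤ (n : ℤ) * ((n : ℤ) ^ 2 - 3 * n + 8) ∧
      (3 * (C.card : ℤ) = (n : ℤ) * ((n : ℤ) ^ 2 - 3 * n + 8) →
        4 * (α : ℤ) ^ 2 = 3 * (n : ℤ) - 8) := by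
  obtain ⟨D, hCD, hD⟩ := exists_half_cubicKernel_eq_zero hsc hα2 hdist
  have ha : |(2 * α : ℝ)| < Fintype.card (Fin n) := by
    rw [Fintype.card_fin, abs_of_nonneg (by positivity)]
    exact_mod_cast (by omega : 2 * α < n)
  have hle := card_le_of_cubicKernel_eq_zero hD ha
  have hsix := six_mul_add_choose_three (K := ℝ) n
  have hC : (3 * #C : ℝ) = 6 * #D := by rw [← hCD]; push_cast; ring
  rw [Fintype.card_fin] at hle
  suffices (3 * #C : ℝ) ≤ n * (n ^ 2 - 3 * n + 8) ∧
      ((3 * #C : ℝ) = n * (n ^ 2 - 3 * n + 8) → (4 * α ^ 2 : ℝ) = 3 * n - 8) by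
    exact_mod_cast this
  refine ⟨by linarith [(by exact_mod_cast hle : (#D : ℝ) ≤ n + n.choose 3)], fun heq => ?_⟩
  have hcard : #D = n + n.choose 3 := by
    exact_mod_cast (by linarith : (#D : ℝ) = n + n.choose 3)
  have key := eq_six_mul_card_of_cubicKernel_eq_zero hD ha
    (by rw [Fintype.card_fin]; omega) (by simpa using hcard)
  rw [Fintype.card_fin, hcard] at key
  push_cast at key
  have hn : (n : ℝ) ≠ 0 := by exact_mod_cast (by omega : n ≠ 0)
  exact mul_left_cancel₀ hn (by linear_combination -key - hsix)
end

section
/- If there exists a set of f mutually quasi-unbiased Hadamard matrices of order n with parameters ((n/2α)², 4α²) and 3n − 4α² − 2 > 0, then f ≤ ⌊(n² − 4α²)/(3n − 4α² − 2)⌋. -/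
/-!
The rows of the `f` Hadamard matrices are `f * n` vectors in `{±1}ⁿ` whose pairwise inner
products lie in `{0, ±2α}`. For `±1` vectors `u, w` put `z = u * w` (coordinatewise): summed over
all pairs of vectors, the elementary symmetric polynomial `e_k(z)` is a sum of squares, and by
Newton's identities `2 e₂(z)` and `24 e₄(z)` are the Krawtchouk polynomials of degree 2 and 4
in `⟨u, w⟩ = ∑ z`. The polynomial `t² (t² - 4α²)` vanishes at every off-diagonal inner product
and equals `24 e₄ + (6n - 8 - 4α²) 2 e₂ + n (3n - 2 - 4α²)`; summing it over all pairs and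
comparing with its diagonal value `n² (n² - 4α²)` gives Delsarte's linear programming bound.
-/

open Matrix

open Finset MvPolynomial

section SignVectors

variable {σ : Type*} [Fintype σ]

theorem sum_sum_eval_esymm_mul_nonneg {ι : Type*} [Fintype ι] (v : ι → σ → ℝ) (k : ℕ) :
    0 ≤ ∑ x, ∑ y, eval (v x * v y) (esymm σ ℝ k) := by
  have h : ∑ x, ∑ y, eval (v x * v y) (esymm σ ℝ k) =
      ∑ t ∈ powersetCard k (univ : Finset σ), (∑ x, ∏ i ∈ t, v x i : ℝ) ^ 2 := by
    simp only [esymm, map_sum, map_prod, eval_X, Pi.mul_apply, prod_mul_distrib, sq,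
      sum_mul_sum]
    exact (sum_congr rfl fun x _ => sum_comm).trans sum_comm
  rw [h]
  positivity

variable {z : σ → ℝ}

theorem sum_pow_even_of_sq_eq_one (hz : ∀ i, z i ^ 2 = 1) (k : ℕ) :
    ∑ i, z i ^ (2 * k) = Fintype.card σ := by
  simp [pow_mul, hz]

theorem sum_pow_odd_of_sq_eq_one (hz : ∀ i, z i ^ 2 = 1) (k : ℕ) :
    ∑ i, z i ^ (2 * k + 1) = ∑ i, z i := by
  simp [pow_succ, pow_mul, hz]

theorem two_mul_eval_esymm_two_of_sq_eq_one (hz : ∀ i, z i ^ 2 = 1) :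
    2 * eval z (esymm σ ℝ 2) = (∑ i, z i) ^ 2 - Fintype.card σ := by
  have newton := congrArg (eval z) (mul_esymm_eq_sum σ ℝ 2)
  simp [Finset.Nat.sum_antidiagonal_eq_sum_range_succ_mk, sum_range_succ, psum] at newton
  linear_combination newton - sum_pow_even_of_sq_eq_one hz 1

theorem twentyfour_mul_eval_esymm_four_of_sq_eq_one (hz : ∀ i, z i ^ 2 = 1) :
    24 * eval z (esymm σ ℝ 4) = (∑ i, z i) ^ 4 - (6 * Fintype.card σ - 8) * (∑ i, z i) ^ 2
      + 3 * (Fintype.card σ : ℝ) ^ 2 - 6 * Fintype.card σ := by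
  have newton3 := congrArg (eval z) (mul_esymm_eq_sum σ ℝ 3)
  have newton4 := congrArg (eval z) (mul_esymm_eq_sum σ ℝ 4)
  simp [sum_filter, Finset.Nat.sum_antidiagonal_eq_sum_range_succ_mk, sum_range_succ, psum]
    at newton3 newton4
  have p2 := sum_pow_even_of_sq_eq_one hz 1
  have p3 := sum_pow_odd_of_sq_eq_one hz 1
  have p4 := sum_pow_even_of_sq_eq_one hz 2
  linear_combination 6 * newton4 + 2 * (∑ i, z i) * newton3
    + ((∑ i, z i) ^ 2 - 3 * Fintype.card σ) * two_mul_eval_esymm_two_of_sq_eq_one hz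
    - 6 * p4 + 8 * (∑ i, z i) * p3 - (2 * (∑ i, z i) ^ 2 + 6 * eval z (esymm σ ℝ 2)) * p2

theorem card_mul_le_of_inner_sq_mul_eq_zero {ι : Type*} [Fintype ι] [Nonempty ι] [Nonempty σ]
    (v : ι → σ → ℝ) (hv : ∀ x i, v x i ^ 2 = 1) {c : ℝ} (hc : c ≤ 6 * Fintype.card σ - 8)
    (hinner : ∀ x y, x ≠ y →
      (∑ i, v x i * v y i) ^ 2 * ((∑ i, v x i * v y i) ^ 2 - c) = 0) :
    (Fintype.card ι : ℝ) * (3 * Fintype.card σ - 2 - c) ≤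
      Fintype.card σ * ((Fintype.card σ : ℝ) ^ 2 - c) := by
  set n : ℝ := (Fintype.card σ : ℝ)
  set N : ℝ := (Fintype.card ι : ℝ)
  set M : ι → ι → ℝ := fun x y => ∑ i, v x i * v y i
  have hz : ∀ x y i, (v x * v y) i ^ 2 = 1 := fun x y i => by
    rw [Pi.mul_apply, mul_pow, hv, hv, one_mul]
  have hM : ∀ x y, ∑ i, (v x * v y) i = M x y := fun _ _ => rfl
  have hdiag : ∀ x, ∑ i, v x i * v x i = n := fun x => by
    simp [n, ← sq, hv]
  have hkraw : ∀ x y, M x y ^ 2 * (M x y ^ 2 - c) = 24 * eval (v x * v y) (esymm σ ℝ 4)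
      + (6 * n - 8 - c) * (2 * eval (v x * v y) (esymm σ ℝ 2)) + n * (3 * n - 2 - c) := by
    intro x y
    rw [twentyfour_mul_eval_esymm_four_of_sq_eq_one (hz x y),
      two_mul_eval_esymm_two_of_sq_eq_one (hz x y), hM]
    ring
  have hsum : ∑ x, ∑ y, M x y ^ 2 * (M x y ^ 2 - c) = N * (n ^ 2 * (n ^ 2 - c)) := by
    have hrow : ∀ x, ∑ y, M x y ^ 2 * (M x y ^ 2 - c) = n ^ 2 * (n ^ 2 - c) := fun x => by
      rw [sum_eq_single_of_mem x (mem_univ x) fun y _ hyx => hinner x y (Ne.symm hyx), hdiag]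
    simp [hrow, N]
  have hexpand : ∑ x, ∑ y, M x y ^ 2 * (M x y ^ 2 - c) =
      24 * ∑ x, ∑ y, eval (v x * v y) (esymm σ ℝ 4)
      + 2 * (6 * n - 8 - c) * ∑ x, ∑ y, eval (v x * v y) (esymm σ ℝ 2)
      + N ^ 2 * (n * (3 * n - 2 - c)) := by
    simp only [hkraw, sum_add_distrib, ← mul_sum, sum_const, card_univ, nsmul_eq_mul, N]
    ring
  have hgram : N ^ 2 * (n * (3 * n - 2 - c)) ≤ N * (n ^ 2 * (n ^ 2 - c)) := by
    rw [← hsum, hexpand, add_comm, le_add_iff_nonneg_right]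
    exact add_nonneg (mul_nonneg (by norm_num) (sum_sum_eval_esymm_mul_nonneg v 4))
      (mul_nonneg (by linarith) (sum_sum_eval_esymm_mul_nonneg v 2))
  have hNn : 0 < N * n := by positivity
  exact le_of_mul_le_mul_left (by linear_combination hgram) hNn

end SignVectors

section Hadamard

variable {m : Type*} [Fintype m] [DecidableEq m]

theorem IsHadamardMatrix.sq_eq_one {H : Matrix m m ℝ} (hH : IsHadamardMatrix H) (i j : m) :
    H i j ^ 2 = 1 := by
  rcases hH.1 i j with h | h <;> simp [h]

theorem IsHadamardMatrix.sum_mul_eq_zero {H : Matrix m m ℝ} (hH : IsHadamardMatrix H)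
    {r s : m} (hrs : r ≠ s) : ∑ k, H r k * H s k = 0 := by
  simpa [Matrix.mul_apply, hrs] using congrFun (congrFun hH.2 r) s

theorem QuasiUnbiased.sum_mul_sq_mul_eq_zero {H K : Matrix m m ℝ} {l a : ℕ}
    (hHK : QuasiUnbiased H K l a) (ha : 0 < a) (r s : m) :
    (∑ k, H r k * K s k) ^ 2 * ((∑ k, H r k * K s k) ^ 2 - a) = 0 := by
  set w := ((Real.sqrt a)⁻¹ • (H * Kᵀ)) r s
  have hsqrt : 0 < Real.sqrt a := Real.sqrt_pos.2 (by exact_mod_cast ha)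
  have hw : ∑ k, H r k * K s k = Real.sqrt a * w := by
    simp [w, Matrix.mul_apply, hsqrt.ne']
  rw [hw, mul_pow, Real.sq_sqrt (Nat.cast_nonneg a)]
  rcases hHK.2.2.1 r s with h | h | h <;> simp [w] at h ⊢ <;> simp [h]

theorem sum_mul_sq_mul_eq_zero_of_quasiUnbiased {ι : Type*} {H : ι → Matrix m m ℝ} {l a : ℕ}
    (hH : ∀ i, IsHadamardMatrix (H i)) (hHK : ∀ i j, i ≠ j → QuasiUnbiased (H i) (H j) l a)
    (ha : 0 < a) {x y : ι × m} (hxy : x ≠ y) :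
    (∑ k, H x.1 x.2 k * H y.1 y.2 k) ^ 2 * ((∑ k, H x.1 x.2 k * H y.1 y.2 k) ^ 2 - a) = 0 := by
  obtain ⟨i, r⟩ := x
  obtain ⟨j, s⟩ := y
  by_cases hij : i = j
  · subst hij
    have hrs : r ≠ s := fun h => hxy (h ▸ rfl)
    simp [(hH i).sum_mul_eq_zero hrs]
  · exact (hHK i j hij).sum_mul_sq_mul_eq_zero ha r s

end Hadamard

theorem stmt_13_general (n f α : ℕ) (hα : 0 < α)
    (h : ∃ H : Fin f → Matrix (Fin n) (Fin n) ℝ,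
      (∀ i, IsHadamardMatrix (H i)) ∧
      ∀ i j, i ≠ j → QuasiUnbiased (H i) (H j) ((n / (2 * α)) ^ 2) (4 * α ^ 2))
    (hpos : (0 : ℤ) < 3 * (n : ℤ) - 4 * (α : ℤ) ^ 2 - 2) :
    (f : ℤ) * (3 * (n : ℤ) - 4 * (α : ℤ) ^ 2 - 2) ≤
      (n : ℤ) ^ 2 - 4 * (α : ℤ) ^ 2 := by
  obtain ⟨H, hHad, hQU⟩ := h
  have hα1 : (1 : ℤ) ≤ α := by exact_mod_cast hα
  have hn : (3 : ℤ) ≤ n := by nlinarith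
  rcases Nat.eq_zero_or_pos f with rfl | hf
  · have h2α : 2 * (α : ℤ) ≤ n := by nlinarith [sq_nonneg (2 * (α : ℤ) - 2)]
    simp only [Nat.cast_zero, zero_mul, sub_nonneg]
    nlinarith
  have : Nonempty (Fin f) := ⟨⟨0, hf⟩⟩
  have : Nonempty (Fin n) := ⟨⟨0, by omega⟩⟩
  have hbound := card_mul_le_of_inner_sq_mul_eq_zero (fun x : Fin f × Fin n => H x.1 x.2)
    (fun x k => (hHad x.1).sq_eq_one x.2 k) (c := ((4 * α ^ 2 : ℕ) : ℝ))
    (by rw [Fintype.card_fin]; exact_mod_cast (by linarith : 4 * (α : ℤ) ^ 2 ≤ 6 * n - 8))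
    fun x y => sum_mul_sq_mul_eq_zero_of_quasiUnbiased hHad hQU (by positivity)
  simp only [Fintype.card_prod, Fintype.card_fin] at hbound
  push_cast at hbound
  have hn' : (0 : ℝ) < n := by exact_mod_cast (by linarith : (0 : ℤ) < n)
  have hreal : (f : ℝ) * (3 * n - 4 * α ^ 2 - 2) ≤ (n : ℝ) ^ 2 - 4 * α ^ 2 :=
    le_of_mul_le_mul_left (by linarith) hn'
  exact_mod_cast hreal

theorem stmt_13 (n f α : ℕ) (hα : 0 < α) (hdvd : 2 * α ∣ n)
    (h : ∃ H : Fin f → Matrix (Fin n) (Fin n) ℝ,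
      (∀ i, IsHadamardMatrix (H i)) ∧
      ∀ i j, i ≠ j → QuasiUnbiased (H i) (H j) ((n / (2 * α)) ^ 2) (4 * α ^ 2))
    (hpos : (0 : ℤ) < 3 * (n : ℤ) - 4 * (α : ℤ) ^ 2 - 2) :
    (f : ℤ) * (3 * (n : ℤ) - 4 * (α : ℤ) ^ 2 - 2) ≤
      (n : ℤ) ^ 2 - 4 * (α : ℤ) ^ 2 :=
  stmt_13_general n f α hα h hpos
end

section
/- The size of any set of mutually weakly unbiased Hadamard matrices of order n is at most 2. -/
open Matrix

/-!
For `±1` vectors `x, y` of length `n`, every term of `∑ (xₖ - 1)(yₖ - 1)` lies in `{0, 4}`, so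
`x ⬝ᵥ y ≡ ∑ x + ∑ y - n (mod 4)`; moreover `∑ x ≡ n (mod 2)`. Thus the row sums of Hadamard
matrices control the entries of their products modulo 4.

If `H, K` are weakly unbiased, then `∑ Hᵢ + ∑ Kⱼ ≡ n + 2` for all rows `i, j`, whereas two distinct
rows of `K` are orthogonal, so `∑ Kⱼ + ∑ Kⱼ' ≡ n`; with the parity of the row sums this forces
`4 ∣ n`. For three mutually weakly unbiased `H₀, H₁, H₂`, the first row sums `u₀, u₁, u₂` satisfy
`uₐ + u_b ≡ n + 2 (mod 4)` for each pair, hence `2u₁ ≡ n + 2`, and together with `u₁ ≡ n (mod 2)`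
this gives `n ≡ 2 (mod 4)`, a contradiction.
-/

/-- A Hadamard matrix with integer entries: entries `±1` and `H * Hᵀ = n • 1`. -/
def IsHadamardMatrixZ {n : ℕ} (H : Matrix (Fin n) (Fin n) ℤ) : Prop :=
  (∀ i j, H i j = 1 ∨ H i j = -1) ∧ H * Hᵀ = (n : ℤ) • 1

/-- Two Hadamard matrices are weakly unbiased: every entry of `H * Kᵀ` is 2 mod 4
and the entries of `H * Kᵀ` take at most two distinct absolute values. -/
def WeaklyUnbiased {n : ℕ} (H K : Matrix (Fin n) (Fin n) ℤ) : Prop :=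
  IsHadamardMatrixZ H ∧ IsHadamardMatrixZ K ∧
    (∀ i j, (H * Kᵀ) i j ≡ 2 [ZMOD 4]) ∧
    ∃ a b : ℤ, ∀ i j, |(H * Kᵀ) i j| = a ∨ |(H * Kᵀ) i j| = b

section SignVector

variable {ι : Type*} [Fintype ι] {x y : ι → ℤ}

lemma sum_modEq_card_of_sign (hx : ∀ i, x i = 1 ∨ x i = -1) :
    ∑ i, x i ≡ Fintype.card ι [ZMOD 2] := by
  have hdiff : ∑ i, x i - Fintype.card ι = ∑ i, (x i - 1) := by
    simp [Finset.sum_sub_distrib]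
  refine (Int.modEq_iff_dvd.mpr ?_).symm
  rw [hdiff]
  refine Finset.dvd_sum fun i _ => ?_
  rcases hx i with h | h <;> simp [h]

lemma dotProduct_modEq_of_sign (hx : ∀ i, x i = 1 ∨ x i = -1) (hy : ∀ i, y i = 1 ∨ y i = -1) :
    x ⬝ᵥ y ≡ ∑ i, x i + ∑ i, y i - Fintype.card ι [ZMOD 4] := by
  have hdiff : x ⬝ᵥ y - (∑ i, x i + ∑ i, y i - Fintype.card ι) = ∑ i, (x i - 1) * (y i - 1) := by
    simp only [dotProduct, sub_one_mul, mul_sub_one, Finset.sum_sub_distrib, Finset.sum_const,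
      Finset.card_univ, nsmul_eq_mul, mul_one]
    ring
  refine (Int.modEq_iff_dvd.mpr ?_).symm
  rw [hdiff]
  refine Finset.dvd_sum fun i _ => ?_
  rcases hx i with h | h <;> rcases hy i with h' | h' <;> simp [h, h']

end SignVector

namespace IsHadamardMatrixZ

variable {n : ℕ} {H K : Matrix (Fin n) (Fin n) ℤ}

lemma row_sum_modEq_two (hH : IsHadamardMatrixZ H) (i : Fin n) :
    ∑ k, H i k ≡ n [ZMOD 2] := by
  simpa using sum_modEq_card_of_sign (hH.1 i)

lemma mul_transpose_apply_modEq (hH : IsHadamardMatrixZ H) (hK : IsHadamardMatrixZ K)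
    (i j : Fin n) : (H * Kᵀ) i j ≡ ∑ k, H i k + ∑ k, K j k - n [ZMOD 4] := by
  simpa [mul_apply'] using dotProduct_modEq_of_sign (hH.1 i) (hK.1 j)

lemma row_sum_add_modEq (hH : IsHadamardMatrixZ H) {i j : Fin n} (hij : i ≠ j) :
    ∑ k, H i k + ∑ k, H j k ≡ n [ZMOD 4] := by
  have horth : (H * Hᵀ) i j = 0 := by simp [hH.2, one_apply_ne hij]
  have := hH.mul_transpose_apply_modEq hH i j
  rw [horth] at this
  simp only [Int.ModEq] at this ⊢
  omega

end IsHadamardMatrixZ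

namespace WeaklyUnbiased

variable {n : ℕ} {H K : Matrix (Fin n) (Fin n) ℤ}

lemma row_sum_add_modEq (hw : WeaklyUnbiased H K) (i j : Fin n) :
    ∑ k, H i k + ∑ k, K j k ≡ n + 2 [ZMOD 4] := by
  have := (hw.1.mul_transpose_apply_modEq hw.2.1 i j).symm.trans (hw.2.2.1 i j)
  simp only [Int.ModEq] at this ⊢
  omega

lemma four_dvd (hw : WeaklyUnbiased H K) : (4 : ℤ) ∣ n := by
  obtain _ | _ | n := n
  · simp
  · have hHK := hw.row_sum_add_modEq 0 0
    have hH := hw.1.row_sum_modEq_two 0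
    have hK := hw.2.1.row_sum_modEq_two 0
    simp only [Int.ModEq] at hHK hH hK
    omega
  · have hHK₀ := hw.row_sum_add_modEq 0 0
    have hHK₁ := hw.row_sum_add_modEq 0 1
    have hK := hw.2.1.row_sum_add_modEq (i := 0) (j := 1) (by simp)
    have hK₀ := hw.2.1.row_sum_modEq_two 0
    simp only [Int.ModEq] at hHK₀ hHK₁ hK hK₀
    omega

end WeaklyUnbiased

lemma not_mutually_weaklyUnbiased_three {n : ℕ} {H K L : Matrix (Fin n) (Fin n) ℤ}
    (hn : 0 < n) :
    ¬ (WeaklyUnbiased H K ∧ WeaklyUnbiased H L ∧ WeaklyUnbiased K L) := by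
  rintro ⟨hHK, hHL, hKL⟩
  have h4 := hHK.four_dvd
  have hHK₀ := hHK.row_sum_add_modEq ⟨0, hn⟩ ⟨0, hn⟩
  have hHL₀ := hHL.row_sum_add_modEq ⟨0, hn⟩ ⟨0, hn⟩
  have hKL₀ := hKL.row_sum_add_modEq ⟨0, hn⟩ ⟨0, hn⟩
  have hK₀ := hHK.2.1.row_sum_modEq_two ⟨0, hn⟩
  simp only [Int.ModEq] at hHK₀ hHL₀ hKL₀ hK₀
  omega

theorem stmt_14 (n f : ℕ) (H : Fin f → Matrix (Fin n) (Fin n) ℤ)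
    (hinj : Function.Injective H)
    (h : ∀ i j, i ≠ j → WeaklyUnbiased (H i) (H j)) : f ≤ 2 := by
  by_contra! hf
  obtain ⟨a, b, c, hab, hac, hbc⟩ : ∃ a b c : Fin f, a ≠ b ∧ a ≠ c ∧ b ≠ c :=
    ⟨⟨0, by omega⟩, ⟨1, by omega⟩, ⟨2, by omega⟩, by simp [Fin.ext_iff]⟩
  rcases Nat.eq_zero_or_pos n with rfl | hn
  · exact hab (hinj (Subsingleton.elim _ _))
  · exact not_mutually_weaklyUnbiased_three hn ⟨h a b hab, h a c hac, h b c hbc⟩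
end

section
/- If there exists a Hadamard matrix of order n ≥ 8, then there exists a pair of weakly unbiased Hadamard matrices H, K of order n with σ(H,K) = {2, n−2}. Concretely, if H is a Hadamard matrix of order n and K is obtained from H by negating its first column, then every entry of HKᵀ has absolute value 2 or n−2, and all entries are ≡ 2 (mod 4). -/
/-! Negating column `z` of `H` gives `K = H D` with `D = I - 2 e_z e_zᵀ`, so `K Kᵀ = H Hᵀ` and
`H Kᵀ = n I - 2 c cᵀ`, where `c` is column `z` of `H`. Its diagonal entries are `n - 2` and its
off-diagonal entries are `±2`; both are `≡ 2 (mod 4)` because the order of a Hadamard matrix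
with at least three rows is divisible by `4`. -/

open Matrix

namespace Matrix

variable {m ι R : Type*} [DecidableEq ι]

def negateCol [Neg R] (H : Matrix m ι R) (z : ι) : Matrix m ι R :=
  fun i j => if j = z then -H i j else H i j

variable [Fintype ι] [Ring R]

theorem negateCol_mul_transpose_negateCol (H : Matrix m ι R) (z : ι) :
    H.negateCol z * (H.negateCol z)ᵀ = H * Hᵀ := by
  ext i j
  refine Finset.sum_congr rfl fun k _ => ?_
  by_cases hk : k = z <;> simp [negateCol, hk]

theorem mul_transpose_negateCol_apply (H : Matrix m ι R) (z : ι) (i j : m) :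
    (H * (H.negateCol z)ᵀ) i j = (H * Hᵀ) i j - 2 * (H i z * H j z) := by
  have hterm : ∀ k, H i k * (H.negateCol z)ᵀ k j
      = H i k * H j k - if k = z then 2 * (H i z * H j z) else 0 := by
    intro k
    by_cases hk : k = z
    · subst hk; simp only [negateCol, transpose_apply, if_true]; noncomm_ring
    · simp [negateCol, hk]
  rw [mul_apply, mul_apply, Finset.sum_congr rfl fun k _ => hterm k, Finset.sum_sub_distrib,
    Finset.sum_ite_eq' Finset.univ z, if_pos (Finset.mem_univ z)]
  rfl

end Matrix

namespace IsHadamardMatrixZ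

variable {n : ℕ} {H : Matrix (Fin n) (Fin n) ℤ}

theorem mul_self_apply (hH : IsHadamardMatrixZ H) (i j : Fin n) : H i j * H i j = 1 := by
  rcases hH.1 i j with h | h <;> rw [h] <;> norm_num

theorem sum_mul_rows (hH : IsHadamardMatrixZ H) (i j : Fin n) :
    ∑ k, H i k * H j k = if i = j then (n : ℤ) else 0 := by
  simpa [mul_apply, one_apply] using congrFun (congrFun hH.2 i) j

theorem negateCol (hH : IsHadamardMatrixZ H) (z : Fin n) :
    IsHadamardMatrixZ (H.negateCol z) := by
  refine ⟨fun i j => ?_, by rw [negateCol_mul_transpose_negateCol, hH.2]⟩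
  by_cases hj : j = z
  · subst hj; rcases hH.1 i j with h | h <;> simp [Matrix.negateCol, h]
  · simpa [Matrix.negateCol, hj] using hH.1 i j

/-- Three rows `a, b, c` give `n = ∑ₖ (H a k + H b k) (H a k + H c k)`, and each summand is a
product of two even numbers. -/
theorem four_dvd (hH : IsHadamardMatrixZ H) (hn : 3 ≤ n) : (4 : ℤ) ∣ n := by
  let a : Fin n := ⟨0, by omega⟩
  let b : Fin n := ⟨1, by omega⟩
  let c : Fin n := ⟨2, by omega⟩
  have hab : a ≠ b := by simp [a, b, Fin.ext_iff]
  have hac : a ≠ c := by simp [a, c, Fin.ext_iff]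
  have hbc : b ≠ c := by simp [b, c, Fin.ext_iff]
  have hsum : ∑ k, (H a k + H b k) * (H a k + H c k) = n := by
    simp only [add_mul, mul_add, Finset.sum_add_distrib, hH.sum_mul_rows]
    simp [hac, hbc, hab.symm]
  have hterm : ∀ k, (4 : ℤ) ∣ (H a k + H b k) * (H a k + H c k) := by
    intro k
    rcases hH.1 a k with h | h <;> rcases hH.1 b k with h' | h' <;>
      rcases hH.1 c k with h'' | h'' <;> rw [h, h', h''] <;> norm_num
  exact hsum ▸ Finset.dvd_sum fun k _ => hterm k

theorem mul_transpose_negateCol_apply_self (hH : IsHadamardMatrixZ H) (z i : Fin n) :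
    (H * (H.negateCol z)ᵀ) i i = n - 2 := by
  rw [mul_transpose_negateCol_apply, hH.2, hH.mul_self_apply]
  simp

theorem mul_transpose_negateCol_apply_of_ne (hH : IsHadamardMatrixZ H) (z : Fin n)
    {i j : Fin n} (hij : i ≠ j) :
    (H * (H.negateCol z)ᵀ) i j = 2 ∨ (H * (H.negateCol z)ᵀ) i j = -2 := by
  rw [mul_transpose_negateCol_apply, hH.2]
  rcases hH.1 i z with h | h <;> rcases hH.1 j z with h' | h' <;> simp [hij, h, h']

end IsHadamardMatrixZ

theorem stmt_16 (n : ℕ) (hn : 8 ≤ n)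
    (H K : Matrix (Fin n) (Fin n) ℤ) (hH : IsHadamardMatrixZ H)
    (hK : ∀ i j, K i j = if (j : ℕ) = 0 then -H i j else H i j) :
    IsHadamardMatrixZ K ∧
      (∀ i j, (H * Kᵀ) i j ≡ 2 [ZMOD 4]) ∧
      (∀ i j, |(H * Kᵀ) i j| = 2 ∨ |(H * Kᵀ) i j| = (n : ℤ) - 2) ∧
      (∃ i j, |(H * Kᵀ) i j| = 2) ∧ (∃ i j, |(H * Kᵀ) i j| = (n : ℤ) - 2) := by
  let z : Fin n := ⟨0, by omega⟩
  obtain rfl : K = H.negateCol z := by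
    ext i j
    simp [hK, Matrix.negateCol, z, Fin.ext_iff]
  have hdiag : ∀ i, |(H * (H.negateCol z)ᵀ) i i| = n - 2 := fun i => by
    rw [hH.mul_transpose_negateCol_apply_self, abs_of_nonneg (by omega)]
  have hoff : ∀ i j, i ≠ j → |(H * (H.negateCol z)ᵀ) i j| = 2 := fun i j hij => by
    rcases hH.mul_transpose_negateCol_apply_of_ne z hij with h | h <;> simp [h]
  obtain ⟨m, hm⟩ := hH.four_dvd (by omega)
  refine ⟨hH.negateCol z, fun i j => ?_, fun i j => ?_, ⟨z, ⟨1, by omega⟩, ?_⟩, ⟨z, z, hdiag z⟩⟩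
  · rcases eq_or_ne i j with rfl | hij
    · rw [hH.mul_transpose_negateCol_apply_self, Int.ModEq]; omega
    · rcases hH.mul_transpose_negateCol_apply_of_ne z hij with h | h <;> rw [h]; decide
  · rcases eq_or_ne i j with rfl | hij
    · exact Or.inr (hdiag i)
    · exact Or.inl (hoff i j hij)
  · exact hoff _ _ (by simp [z, Fin.ext_iff])
end

section
/- Suppose n = 4k² with k even, and suppose there exists a pair of unbiased Hadamard matrices of order n. Then there exists a pair of weakly unbiased Hadamard matrices H, K of order n with σ(H,K) = {√n − 2, √n + 2}. -/
open Matrix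

lemma aux_transpose_mul {n : ℕ} (A : Matrix (Fin n) (Fin n) ℤ)
    (hn : 0 < n) (h : A * Aᵀ = (n : ℤ) • 1) : Aᵀ * A = (n : ℤ) • 1 := by
  let B : Matrix (Fin n) (Fin n) ℚ := A.map (Int.cast)
  have key : ∀ (C D : Matrix (Fin n) (Fin n) ℤ) (i j : Fin n),
      ((C.map (Int.cast : ℤ → ℚ)) * (D.map (Int.cast : ℤ → ℚ))) i j = (((C * D) i j : ℤ) : ℚ) := by
    intro C D i j
    simp [Matrix.mul_apply, Matrix.map_apply]
  have hB : B * Bᵀ = (n : ℚ) • 1 := by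
    ext i j
    have := key A Aᵀ i j
    simp only [Matrix.transpose_map] at this ⊢
    rw [this, h]
    simp [Matrix.smul_apply, Matrix.one_apply, apply_ite (Int.cast : ℤ → ℚ)]
  have hnQ : (n : ℚ) ≠ 0 := by positivity
  have h1 : B * ((n : ℚ)⁻¹ • Bᵀ) = 1 := by
    rw [Matrix.mul_smul, hB, smul_smul, inv_mul_cancel₀ hnQ, one_smul]
  have h2 : ((n : ℚ)⁻¹ • Bᵀ) * B = 1 := mul_eq_one_comm.mp h1
  have h3 : Bᵀ * B = (n : ℚ) • 1 := by
    rw [Matrix.smul_mul] at h2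
    calc Bᵀ * B = (n : ℚ) • ((n : ℚ)⁻¹ • (Bᵀ * B)) := by
          rw [smul_smul, mul_inv_cancel₀ hnQ, one_smul]
      _ = (n : ℚ) • 1 := by rw [h2]
  ext i j
  have h4 := congrFun (congrFun h3 i) j
  rw [show Bᵀ = Aᵀ.map Int.cast from (Matrix.transpose_map).symm, key] at h4
  have h5 : (((n : ℤ) • (1 : Matrix (Fin n) (Fin n) ℤ)) i j : ℚ) = ((n : ℚ) • (1 : Matrix (Fin n) (Fin n) ℚ)) i j := by
    simp [Matrix.smul_apply, Matrix.one_apply, apply_ite (Int.cast : ℤ → ℚ)]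
  rw [← h5] at h4
  exact_mod_cast h4

theorem stmt_17 (k : ℕ) (hk : 0 < k) (hke : Even k)
    (h : ∃ H H' : Matrix (Fin (4 * k ^ 2)) (Fin (4 * k ^ 2)) ℤ,
      IsHadamardMatrixZ H ∧ IsHadamardMatrixZ H' ∧
        ∀ i j, |(H * H'ᵀ) i j| = 2 * (k : ℤ)) :
    ∃ H K : Matrix (Fin (4 * k ^ 2)) (Fin (4 * k ^ 2)) ℤ,
      IsHadamardMatrixZ H ∧ IsHadamardMatrixZ K ∧
        (∀ i j, (H * Kᵀ) i j ≡ 2 [ZMOD 4]) ∧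
        (∀ i j, |(H * Kᵀ) i j| = 2 * (k : ℤ) - 2 ∨ |(H * Kᵀ) i j| = 2 * (k : ℤ) + 2) ∧
        (∃ i j, |(H * Kᵀ) i j| = 2 * (k : ℤ) - 2) ∧
        (∃ i j, |(H * Kᵀ) i j| = 2 * (k : ℤ) + 2) := by
  obtain ⟨H, H', hH, hH', habs⟩ := h
  have hn0 : 0 < 4 * k ^ 2 := by positivity
  obtain ⟨m, hm⟩ := hke
  have hk1 : (1 : ℤ) ≤ (k : ℤ) := by exact_mod_cast hk
  set z : Fin (4 * k ^ 2) := ⟨0, hn0⟩ with hz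
  set K : Matrix (Fin (4 * k ^ 2)) (Fin (4 * k ^ 2)) ℤ :=
    fun i j => if j = z then -H' i j else H' i j with hKdef
  have hKent : ∀ i j, K i j = 1 ∨ K i j = -1 := by
    intro i j
    by_cases hj : j = z
    · subst hj; rcases hH'.1 i z with h1 | h1 <;> simp [hKdef, h1]
    · rcases hH'.1 i j with h1 | h1 <;> simp [hKdef, hj, h1]
  have hKK : K * Kᵀ = ((4 * k ^ 2 : ℕ) : ℤ) • 1 := by
    rw [← hH'.2]
    ext i j
    simp only [Matrix.mul_apply, Matrix.transpose_apply]
    apply Finset.sum_congr rfl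
    intro l _
    by_cases hl : l = z <;> simp [hKdef, hl] <;> ring
  have hKHad : IsHadamardMatrixZ K := ⟨hKent, hKK⟩
  -- entry formula
  have hform : ∀ i j, (H * Kᵀ) i j = (H * H'ᵀ) i j - 2 * (H i z * H' j z) := by
    intro i j
    simp only [Matrix.mul_apply, Matrix.transpose_apply]
    have : ∀ l, H i l * K j l
        = H i l * H' j l - (if l = z then 2 * (H i z * H' j z) else 0) := by
      intro l
      by_cases hl : l = z <;> simp [hKdef, hl] <;> ring
    rw [Finset.sum_congr rfl (fun l _ => this l), Finset.sum_sub_distrib,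
      Finset.sum_ite_eq' Finset.univ z]
    simp
  -- values
  have hval : ∀ i j, (H * Kᵀ) i j = 2 * (k : ℤ) - 2 ∨ (H * Kᵀ) i j = -(2 * (k : ℤ) - 2)
      ∨ (H * Kᵀ) i j = 2 * (k : ℤ) + 2 ∨ (H * Kᵀ) i j = -(2 * (k : ℤ) + 2) := by
    intro i j
    have ha := habs i j
    have h2k : (0 : ℤ) ≤ 2 * (k : ℤ) := by positivity
    rw [abs_eq h2k] at ha
    have e := hform i j
    rcases ha with h1 | h1 <;> rcases hH.1 i z with h2 | h2 <;>
      rcases hH'.1 j z with h3 | h3 <;> rw [h1, h2, h3] at e <;> omega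
  -- mod 4
  have hmod : ∀ i j, (H * Kᵀ) i j ≡ 2 [ZMOD 4] := by
    intro i j
    have := hval i j
    show (H * Kᵀ) i j % 4 = 2 % 4
    have hmZ : (k : ℤ) = 2 * (m : ℤ) := by exact_mod_cast hm.trans (two_mul m).symm
    omega
  -- abs dichotomy
  have habs2 : ∀ i j, |(H * Kᵀ) i j| = 2 * (k : ℤ) - 2 ∨ |(H * Kᵀ) i j| = 2 * (k : ℤ) + 2 := by
    intro i j
    have hnn : (0 : ℤ) ≤ 2 * (k : ℤ) - 2 := by linarith
    have hnn' : (0 : ℤ) ≤ 2 * (k : ℤ) + 2 := by linarith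
    rcases hval i j with h1 | h1 | h1 | h1
    · left; rw [abs_eq hnn]; tauto
    · left; rw [abs_eq hnn]; tauto
    · right; rw [abs_eq hnn']; tauto
    · right; rw [abs_eq hnn']; tauto
  -- sum of squares in each row
  have hKtK : Kᵀ * K = ((4 * k ^ 2 : ℕ) : ℤ) • 1 := aux_transpose_mul K hn0 hKK
  have hsum : ∀ i, ∑ j, ((H * Kᵀ) i j) ^ 2 = ((4 * k ^ 2 : ℕ) : ℤ) ^ 2 := by
    intro i
    have hMM : (H * Kᵀ) * (H * Kᵀ)ᵀ
        = ((4 * k ^ 2 : ℕ) : ℤ) • (((4 * k ^ 2 : ℕ) : ℤ) • 1) := by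
      rw [Matrix.transpose_mul, Matrix.transpose_transpose, Matrix.mul_assoc,
        ← Matrix.mul_assoc Kᵀ, hKtK, Matrix.smul_mul, Matrix.one_mul,
        Matrix.mul_smul, hH.2]
    have e1 := congrFun (congrFun hMM i) i
    rw [Matrix.mul_apply] at e1
    simp only [Matrix.transpose_apply, Matrix.smul_apply,
      Matrix.one_apply_eq, smul_eq_mul, mul_one] at e1
    calc ∑ j, ((H * Kᵀ) i j) ^ 2 = ∑ j, (H * Kᵀ) i j * (H * Kᵀ) i j := by
          apply Finset.sum_congr rfl; intro j _; ring
      _ = ((4 * k ^ 2 : ℕ) : ℤ) ^ 2 := by rw [e1]; ring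
  have hcard : (Finset.univ : Finset (Fin (4 * k ^ 2))).card = 4 * k ^ 2 := by simp
  refine ⟨H, K, hH, hKHad, hmod, habs2, ?_, ?_⟩
  · by_contra hc
    push_neg at hc
    have hall : ∀ j, ((H * Kᵀ) z j) ^ 2 = (2 * (k : ℤ) + 2) ^ 2 := by
      intro j
      rcases habs2 z j with h1 | h1
      · exact absurd h1 (hc z j)
      · rw [← sq_abs, h1]
    have := hsum z
    rw [Finset.sum_congr rfl (fun j _ => hall j), Finset.sum_const, hcard] at this
    have hkN : ((4 * k ^ 2 : ℕ) : ℤ) = 4 * (k : ℤ) ^ 2 := by push_cast; ring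
    rw [hkN] at this
    simp only [nsmul_eq_mul] at this
    push_cast at this
    nlinarith [sq_nonneg ((k : ℤ)), hk1]
  · by_contra hc
    push_neg at hc
    have hall : ∀ j, ((H * Kᵀ) z j) ^ 2 = (2 * (k : ℤ) - 2) ^ 2 := by
      intro j
      rcases habs2 z j with h1 | h1
      · rw [← sq_abs, h1]
      · exact absurd h1 (hc z j)
    have := hsum z
    rw [Finset.sum_congr rfl (fun j _ => hall j), Finset.sum_const, hcard] at this
    have hkN : ((4 * k ^ 2 : ℕ) : ℤ) = 4 * (k : ℤ) ^ 2 := by push_cast; ring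
    rw [hkN] at this
    simp only [nsmul_eq_mul] at this
    push_cast at this
    nlinarith [sq_nonneg ((k : ℤ)), hk1]
end

section
/- Two linear Z_4-codes C, C' of length n are equivalent (i.e., C = τ_{j_1}⋯τ_{j_ℓ}σ(C') for some permutation σ of coordinates and sign changes τ_j negating the j-th coordinate) if and only if the associated digraphs Γ(C) and Γ(C') are isomorphic, where Γ(C) has vertex set (C∖{0}) ∪ ({1,…,n}×(Z_4∖{0})), arcs (c,(j,c_j)) for each nonzero codeword c and each coordinate j with c_j ≠ 0, together with arcs ((j,x),(j,2)) and ((j,2),(j,x)) for each coordinate j and each x ∈ {1,3}. -/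
/-- Vertex set of the digraph `Γ(C)` attached to a `ℤ₄`-code `C` of length `n`:
the nonzero codewords together with the pairs `(j, x)` with `x ∈ ℤ₄ \ {0}`. -/
def Z4Vert (n : ℕ) (C : Set (Fin n → ZMod 4)) :=
  {c : Fin n → ZMod 4 // c ∈ C ∧ c ≠ 0} ⊕ (Fin n × {x : ZMod 4 // x ≠ 0})

/-- Arc relation of the digraph `Γ(C)`: arcs `(c, (j, c_j))` for every nonzero
codeword `c` and coordinate `j` with `c_j ≠ 0`, together with arcs
`((j, x), (j, 2))` and `((j, 2), (j, x))` for every `j` and `x ∈ {1, 3}`. -/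
def Z4Arc (n : ℕ) (C : Set (Fin n → ZMod 4)) : Z4Vert n C → Z4Vert n C → Prop :=
  fun u v =>
    match u, v with
    | Sum.inl c, Sum.inr (j, x) => x.1 = c.1 j
    | Sum.inr (j, x), Sum.inr (j', y) =>
        j = j' ∧ ((x.1 = 2 ∧ (y.1 = 1 ∨ y.1 = 3)) ∨ ((x.1 = 1 ∨ x.1 = 3) ∧ y.1 = 2))
    | _, _ => False

/-- Two linear `ℤ₄`-codes are equivalent: one is obtained from the other by a
permutation of the coordinates together with negations of some coordinates. -/
def Z4CodeEquiv (n : ℕ) (C C' : Submodule (ZMod 4) (Fin n → ZMod 4)) : Prop :=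
  ∃ σ : Equiv.Perm (Fin n), ∃ ε : Fin n → ZMod 4, (∀ j, ε j = 1 ∨ ε j = -1) ∧
    (C : Set (Fin n → ZMod 4)) =
      (fun x : Fin n → ZMod 4 => fun j => ε j * x (σ j)) '' (C' : Set (Fin n → ZMod 4))

/-!
The vertices `(j, x)` of `Γ(C)` are exactly those with an incoming arc, so an isomorphism
`Γ(C) ≅ Γ(C')` maps them among themselves and the nonzero codewords among themselves. For nonzero
`x, y` there is an arc `(j, x) → (j', y)` iff `j = j'` and `x * y = 2`, so every fibre
`{j} × {1, 2, 3}` is the path `1 ⇄ 2 ⇄ 3`; an injective arc-preserving map sends it onto a fibre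
`{σ j} × {1, 2, 3}` by `x ↦ δ_j x` with `δ_j = ±1`, and distinct fibres go to distinct fibres.
A nonzero codeword `c` is determined by its out-neighbours `(j, c_j)`, so the isomorphism sends
`c` to the codeword `c'` with `c = (δ_j c'_{σ j})_j`. Conversely, such a signed permutation of
coordinates induces an isomorphism. Since both codes contain `0`, it suffices to compare their
nonzero codewords.
-/

open Function

attribute [reducible] Z4Vert

namespace Z4Code

section Signs

variable {ε : ZMod 4}

lemma sign_mul_self (hε : ε = 1 ∨ ε = -1) : ε * ε = 1 := by
  rcases hε with rfl | rfl <;> decide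

lemma sign_mul_sign_mul (hε : ε = 1 ∨ ε = -1) (y : ZMod 4) : ε * (ε * y) = y := by
  rw [← mul_assoc, sign_mul_self hε, one_mul]

lemma sign_mul_eq_iff (hε : ε = 1 ∨ ε = -1) {y b : ZMod 4} : ε * y = b ↔ y = ε * b := by
  constructor
  · rintro rfl
    exact (sign_mul_sign_mul hε y).symm
  · rintro rfl
    exact sign_mul_sign_mul hε b

lemma sign_mul_ne_zero_iff (hε : ε = 1 ∨ ε = -1) {y : ZMod 4} : ε * y ≠ 0 ↔ y ≠ 0 :=
  (IsUnit.of_mul_eq_one _ (sign_mul_self hε)).mul_right_eq_zero.not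

lemma sign_mul_two (hε : ε = 1 ∨ ε = -1) : ε * 2 = 2 := by
  rcases hε with rfl | rfl <;> decide

end Signs

lemma eq_one_or_two_or_three_of_ne_zero : ∀ x : ZMod 4, x ≠ 0 → x = 1 ∨ x = 2 ∨ x = 3 := by
  decide

lemma fibreArc_iff_mul_eq_two : ∀ x y : ZMod 4, x ≠ 0 → y ≠ 0 →
    ((x = 2 ∧ (y = 1 ∨ y = 3)) ∨ ((x = 1 ∨ x = 3) ∧ y = 2) ↔ x * y = 2) := by
  decide

lemma exists_ne_zero_mul_eq_two : ∀ x : ZMod 4, x ≠ 0 → ∃ y : ZMod 4, y ≠ 0 ∧ y * x = 2 := by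
  decide

/-- A path `x ⇄ y ⇄ z` with `x ≠ z` in the fibre digraph is `x ⇄ 2 ⇄ -x` with `x = ±1`. -/
lemma sign_of_mul_eq_two : ∀ x y : ZMod 4, x * y = 2 → ∀ z, y * z = 2 → x ≠ z →
    (x = 1 ∨ x = -1) ∧ y = x * 2 ∧ z = x * 3 := by
  decide

lemma eq_of_forall_ne_zero_eq_iff {M : Type*} [Zero M] {a b : M}
    (h : ∀ y, y ≠ 0 → (y = a ↔ y = b)) : a = b := by
  by_cases ha : a = 0
  · by_cases hb : b = 0
    · exact ha.trans hb.symm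
    · exact ((h b hb).2 rfl).symm
  · exact (h a ha).1 rfl

lemma diff_singleton_inj {α : Type*} {s t : Set α} {a : α} (hs : a ∈ s) (ht : a ∈ t) :
    s \ {a} = t \ {a} ↔ s = t := by
  refine ⟨fun h => ?_, fun h => h ▸ rfl⟩
  rw [← Set.insert_eq_of_mem hs, ← Set.insert_eq_of_mem ht, ← Set.insert_sdiff_singleton, h,
    Set.insert_sdiff_singleton]

section SignedPerm

variable {ι : Type*} {σ : Equiv.Perm ι} {ε : ι → ZMod 4}

def signedPerm (σ : Equiv.Perm ι) (ε : ι → ZMod 4) (x : ι → ZMod 4) : ι → ZMod 4 :=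
  fun j => ε j * x (σ j)

lemma signedPerm_zero : signedPerm σ ε 0 = 0 :=
  funext fun _ => mul_zero _

lemma signedPerm_injective (hε : ∀ j, ε j = 1 ∨ ε j = -1) : Injective (signedPerm σ ε) := by
  intro x y hxy
  funext i
  have := congrArg (ε (σ.symm i) * ·) (congrFun hxy (σ.symm i))
  simpa only [signedPerm, sign_mul_sign_mul (hε _), Equiv.apply_symm_apply] using this

lemma diff_zero_eq_image_iff (hε : ∀ j, ε j = 1 ∨ ε j = -1) {S S' : Set (ι → ZMod 4)}
    (hS : 0 ∈ S) (hS' : 0 ∈ S') :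
    S \ {0} = signedPerm σ ε '' (S' \ {0}) ↔ S = signedPerm σ ε '' S' := by
  rw [Set.image_sdiff (signedPerm_injective hε), Set.image_singleton, signedPerm_zero]
  exact diff_singleton_inj hS ⟨0, hS', signedPerm_zero⟩

def fibreEquiv (σ : Equiv.Perm ι) (ε : ι → ZMod 4) (hε : ∀ j, ε j = 1 ∨ ε j = -1) :
    ι × {x : ZMod 4 // x ≠ 0} ≃ ι × {x : ZMod 4 // x ≠ 0} :=
  Equiv.prodShear σ fun j => (Involutive.toPerm _ (sign_mul_sign_mul (hε j))).subtypeEquiv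
    fun _ => (sign_mul_ne_zero_iff (hε j)).symm

end SignedPerm

section Digraph

variable {n : ℕ} {S S' : Set (Fin n → ZMod 4)}

lemma Z4Arc_inl_inr {c : {c // c ∈ S ∧ c ≠ 0}} {w : Fin n × {x : ZMod 4 // x ≠ 0}} :
    Z4Arc n S (Sum.inl c) (Sum.inr w) ↔ (w.2 : ZMod 4) = c.1 w.1 :=
  Iff.rfl

lemma Z4Arc_inr_inr {w w' : Fin n × {x : ZMod 4 // x ≠ 0}} :
    Z4Arc n S (Sum.inr w) (Sum.inr w') ↔ w.1 = w'.1 ∧ (w.2 : ZMod 4) * w'.2 = 2 :=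
  and_congr_right fun _ => fibreArc_iff_mul_eq_two _ _ w.2.2 w'.2.2

lemma not_Z4Arc_inl (u : Z4Vert n S) (c : {c // c ∈ S ∧ c ≠ 0}) : ¬ Z4Arc n S u (Sum.inl c) := by
  rcases u with _ | _ <;> exact id

lemma exists_Z4Arc_iff_isRight (v : Z4Vert n S) : (∃ u, Z4Arc n S u v) ↔ v.isRight := by
  rcases v with c | ⟨j, x⟩
  · simpa using fun u => not_Z4Arc_inl u c
  · obtain ⟨y, hy, hyx⟩ := exists_ne_zero_mul_eq_two x.1 x.2
    exact iff_of_true ⟨Sum.inr (j, ⟨y, hy⟩), Z4Arc_inr_inr.2 ⟨rfl, hyx⟩⟩ rfl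

section Isomorphism

variable {e : Z4Vert n S ≃ Z4Vert n S'}

lemma isRight_apply_of_Z4Arc_iff (he : ∀ u v, Z4Arc n S u v ↔ Z4Arc n S' (e u) (e v))
    (v : Z4Vert n S) : (e v).isRight = v.isRight := by
  rw [Bool.eq_iff_iff, ← exists_Z4Arc_iff_isRight, ← exists_Z4Arc_iff_isRight, e.surjective.exists]
  exact exists_congr fun u => (he u v).symm

lemma Z4Arc_iff_symm (he : ∀ u v, Z4Arc n S u v ↔ Z4Arc n S' (e u) (e v)) (u v : Z4Vert n S') :
    Z4Arc n S' u v ↔ Z4Arc n S (e.symm u) (e.symm v) := by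
  rw [he, e.apply_symm_apply, e.apply_symm_apply]

lemma exists_apply_inr_eq_inr (he : ∀ u v, Z4Arc n S u v ↔ Z4Arc n S' (e u) (e v))
    (w : Fin n × {x : ZMod 4 // x ≠ 0}) : ∃ w', e (Sum.inr w) = Sum.inr w' :=
  Sum.isRight_iff.1 (by rw [isRight_apply_of_Z4Arc_iff he]; rfl)

lemma exists_apply_inl_eq_inl (he : ∀ u v, Z4Arc n S u v ↔ Z4Arc n S' (e u) (e v))
    (c : {c // c ∈ S ∧ c ≠ 0}) : ∃ c', e (Sum.inl c) = Sum.inl c' :=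
  Sum.isLeft_iff.1 (Sum.not_isRight.1 (by rw [isRight_apply_of_Z4Arc_iff he]; simp))

end Isomorphism

end Digraph

section Fibres

variable {ι : Type*} {p : ι × {x : ZMod 4 // x ≠ 0} → ι × {x : ZMod 4 // x ≠ 0}}

lemma exists_sign_of_fibre_adj (hp : Injective p)
    (hadj : ∀ j (x y : {x : ZMod 4 // x ≠ 0}), (x : ZMod 4) * y = 2 →
      (p (j, x)).1 = (p (j, y)).1 ∧ ((p (j, x)).2 : ZMod 4) * (p (j, y)).2 = 2) (j : ι) :
    ∃ j' : ι, ∃ δ : ZMod 4, (δ = 1 ∨ δ = -1) ∧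
      ∀ x : {x : ZMod 4 // x ≠ 0}, (p (j, x)).1 = j' ∧ ((p (j, x)).2 : ZMod 4) = δ * x := by
  let one : {x : ZMod 4 // x ≠ 0} := ⟨1, by decide⟩
  let two : {x : ZMod 4 // x ≠ 0} := ⟨2, by decide⟩
  let three : {x : ZMod 4 // x ≠ 0} := ⟨3, by decide⟩
  obtain ⟨h12, a12⟩ := hadj j one two (by decide)
  obtain ⟨h23, a23⟩ := hadj j two three (by decide)
  have h13 : ((p (j, one)).2 : ZMod 4) ≠ (p (j, three)).2 := fun h =>
    (by decide : (1 : ZMod 4) ≠ 3)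
      (congrArg (fun w => (w.2 : ZMod 4)) (hp (Prod.ext (h12.trans h23) (Subtype.ext h))))
  obtain ⟨hδ, h2, h3⟩ := sign_of_mul_eq_two _ _ a12 _ a23 h13
  refine ⟨(p (j, one)).1, _, hδ, ?_⟩
  rintro ⟨x, hx⟩
  rcases eq_one_or_two_or_three_of_ne_zero x hx with rfl | rfl | rfl
  · exact ⟨rfl, (mul_one _).symm⟩
  · exact ⟨h12.symm, h2⟩
  · exact ⟨(h12.trans h23).symm, h3⟩

lemma exists_perm_sign_of_fibre_adj [Finite ι] (hp : Injective p)
    (hadj : ∀ j (x y : {x : ZMod 4 // x ≠ 0}), (x : ZMod 4) * y = 2 →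
      (p (j, x)).1 = (p (j, y)).1 ∧ ((p (j, x)).2 : ZMod 4) * (p (j, y)).2 = 2) :
    ∃ σ : Equiv.Perm ι, ∃ δ : ι → ZMod 4, (∀ j, δ j = 1 ∨ δ j = -1) ∧
      ∀ j x, (p (j, x)).1 = σ j ∧ ((p (j, x)).2 : ZMod 4) = δ j * x := by
  choose J δ hδ hJδ using exists_sign_of_fibre_adj hp hadj
  let two : {x : ZMod 4 // x ≠ 0} := ⟨2, by decide⟩
  have hJ : Injective J := fun j j' h => congrArg Prod.fst <| hp <| Prod.ext
    ((hJδ j two).1.trans (h.trans (hJδ j' two).1.symm))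
    (Subtype.ext <| ((hJδ j two).2.trans (sign_mul_two (hδ j))).trans
      ((hJδ j' two).2.trans (sign_mul_two (hδ j'))).symm)
  exact ⟨Equiv.ofBijective J (Finite.injective_iff_bijective.1 hJ), δ, hδ, hJδ⟩

end Fibres

section Equivalence

variable {n : ℕ} {S S' : Set (Fin n → ZMod 4)}

theorem exists_signedPerm_of_Z4Arc_iff {e : Z4Vert n S ≃ Z4Vert n S'}
    (he : ∀ u v, Z4Arc n S u v ↔ Z4Arc n S' (e u) (e v)) :
    ∃ σ : Equiv.Perm (Fin n), ∃ δ : Fin n → ZMod 4, (∀ j, δ j = 1 ∨ δ j = -1) ∧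
      S \ {0} = signedPerm σ δ '' (S' \ {0}) := by
  choose p hp using exists_apply_inr_eq_inr he
  have hp_inj : Injective p := fun w w' h =>
    Sum.inr_injective (e.injective (by rw [hp, hp, h]))
  obtain ⟨σ, δ, hδ, hpσ⟩ := exists_perm_sign_of_fibre_adj hp_inj fun j x y hxy => by
    have := (he (Sum.inr (j, x)) (Sum.inr (j, y))).1 (Z4Arc_inr_inr.2 ⟨rfl, hxy⟩)
    rwa [hp, hp, Z4Arc_inr_inr] at this
  have hcode : ∀ c c', e (Sum.inl c) = Sum.inl c' → c.1 = signedPerm σ δ c'.1 := fun c c' hc =>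
    funext fun j => eq_of_forall_ne_zero_eq_iff fun y hy => by
      have := he (Sum.inl c) (Sum.inr (j, ⟨y, hy⟩))
      rwa [hc, hp, Z4Arc_inl_inr, Z4Arc_inl_inr, (hpσ j _).1, (hpσ j _).2,
        sign_mul_eq_iff (hδ j)] at this
  refine ⟨σ, δ, hδ, ?_⟩
  ext c
  constructor
  · rintro ⟨hc, hc0⟩
    obtain ⟨c', hc'⟩ := exists_apply_inl_eq_inl he ⟨c, hc, hc0⟩
    exact ⟨c'.1, c'.2, (hcode _ _ hc').symm⟩
  · rintro ⟨c', hc', rfl⟩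
    obtain ⟨c, hc⟩ := exists_apply_inl_eq_inl (Z4Arc_iff_symm he) ⟨c', hc'⟩
    rw [← hcode c _ (e.symm_apply_eq.1 hc).symm]
    exact c.2

theorem exists_Z4Arc_iff_of_signedPerm {σ : Equiv.Perm (Fin n)} {ε : Fin n → ZMod 4}
    (hε : ∀ j, ε j = 1 ∨ ε j = -1) (hS : S \ {0} = signedPerm σ ε '' (S' \ {0})) :
    ∃ e : Z4Vert n S ≃ Z4Vert n S', ∀ u v, Z4Arc n S u v ↔ Z4Arc n S' (e u) (e v) := by
  let codeEquiv : {c // c ∈ S' ∧ c ≠ 0} ≃ {c // c ∈ S ∧ c ≠ 0} :=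
    (Equiv.Set.image _ _ (signedPerm_injective hε)).trans (Equiv.setCongr hS.symm)
  refine ⟨Equiv.sumCongr codeEquiv.symm (fibreEquiv σ ε hε), ?_⟩
  rintro (c | ⟨j, x⟩) (c' | ⟨j', y⟩)
  · exact iff_of_false (not_Z4Arc_inl _ _) (not_Z4Arc_inl _ _)
  · have hc : c.1 = signedPerm σ ε (codeEquiv.symm c).1 :=
      congrArg Subtype.val (codeEquiv.apply_symm_apply c).symm
    show (y : ZMod 4) = c.1 j' ↔ ε j' * y = (codeEquiv.symm c).1 (σ j')
    rw [hc]
    exact (sign_mul_eq_iff (hε j')).symm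
  · exact iff_of_false (not_Z4Arc_inl _ _) (not_Z4Arc_inl _ _)
  · refine Z4Arc_inr_inr.trans (Iff.trans ?_ Z4Arc_inr_inr.symm)
    show j = j' ∧ (x : ZMod 4) * y = 2 ↔ σ j = σ j' ∧ ε j * x * (ε j' * y) = 2
    rw [σ.injective.eq_iff]
    refine and_congr_right fun h => ?_
    subst h
    rw [mul_mul_mul_comm, sign_mul_self (hε j), one_mul]

end Equivalence

end Z4Code

open Z4Code in
theorem stmt_18 (n : ℕ) (C C' : Submodule (ZMod 4) (Fin n → ZMod 4)) :
    Z4CodeEquiv n C C' ↔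
      ∃ e : Z4Vert n (C : Set (Fin n → ZMod 4)) ≃ Z4Vert n (C' : Set (Fin n → ZMod 4)),
        ∀ u v, Z4Arc n (C : Set (Fin n → ZMod 4)) u v ↔
          Z4Arc n (C' : Set (Fin n → ZMod 4)) (e u) (e v) := by
  constructor
  · rintro ⟨σ, ε, hε, hC⟩
    exact exists_Z4Arc_iff_of_signedPerm hε
      ((diff_zero_eq_image_iff hε C.zero_mem C'.zero_mem).2 hC)
  · rintro ⟨e, he⟩
    obtain ⟨σ, δ, hδ, hC⟩ := exists_signedPerm_of_Z4Arc_iff he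
    exact ⟨σ, δ, hδ, (diff_zero_eq_image_iff hδ C.zero_mem C'.zero_mem).1 hC⟩
end

section
/- Let C be a binary self-complementary code of length n whose set of occurring nonzero distances is {n/2−b, n/2−a, n/2, n/2+a, n/2+b, n} with even integers 0 < a < b < n/2. If 15n² − 30n + 16 − 4(3n−2)(a² + b²) + 16a²b² > 0 and 5(n−2) − 2a² − 2b² ≥ 0, then |C| ≤ ⌊2n(n² − 4a²)(n² − 4b²)/(15n² − 30n + 16 − 4(3n−2)(a²+b²) + 16a²b²)⌋. -/
open Finset
open scoped symmDiff

namespace Stmt19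

def sgn (u : ZMod 2) : ℤ := if u = 0 then 1 else -1

lemma sgn_sq (u : ZMod 2) : sgn u * sgn u = 1 := by
  unfold sgn; split <;> norm_num

lemma sgn_add_one (u : ZMod 2) : sgn (u + 1) = - sgn u := by
  revert u; decide

lemma sgn_mul (u v : ZMod 2) : sgn u * sgn v = if u = v then 1 else -1 := by
  revert u v; decide

variable {n : ℕ}

def chi (S : Finset (Fin n)) (x : Fin n → ZMod 2) : ℤ := ∏ i ∈ S, sgn (x i)

def ip (x y : Fin n → ZMod 2) : ℤ := ∑ i : Fin n, sgn (x i) * sgn (y i)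

def uu (C : Finset (Fin n → ZMod 2)) (S : Finset (Fin n)) : ℤ := ∑ x ∈ C, chi S x

def P (n : ℕ) : ℕ → ℕ → ℤ
  | 0, t => if t = 0 then 1 else 0
  | k+1, t => (t : ℤ) * P n k (t - 1) + ((n : ℤ) - t) * P n k (t + 1)

lemma P_zero (t : ℕ) : P n 0 t = if t = 0 then 1 else 0 := rfl

lemma P_succ (k t : ℕ) : P n (k+1) t = (t : ℤ) * P n k (t - 1) + ((n : ℤ) - t) * P n k (t + 1) := rfl

lemma symmDiff_singleton_mem {S : Finset (Fin n)} {i : Fin n} (h : i ∈ S) :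
    S ∆ ({i} : Finset (Fin n)) = S.erase i := by
  ext j
  by_cases hj : j = i <;> simp [Finset.mem_symmDiff, Finset.mem_erase, hj, h] <;> tauto

lemma symmDiff_singleton_not_mem {S : Finset (Fin n)} {i : Fin n} (h : i ∉ S) :
    S ∆ ({i} : Finset (Fin n)) = insert i S := by
  ext j
  by_cases hj : j = i <;> simp [Finset.mem_symmDiff, Finset.mem_insert, hj, h] <;> tauto

lemma chi_symmDiff_singleton (S : Finset (Fin n)) (i : Fin n) (x : Fin n → ZMod 2) :
    chi (S ∆ {i}) x = chi S x * sgn (x i) := by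
  by_cases h : i ∈ S
  · rw [symmDiff_singleton_mem h]
    unfold chi
    rw [← Finset.mul_prod_erase S _ h, mul_comm (sgn (x i)), mul_assoc, sgn_sq, mul_one]
  · rw [symmDiff_singleton_not_mem h]
    unfold chi
    rw [Finset.prod_insert h, mul_comm]

lemma chi_empty (x : Fin n → ZMod 2) : chi (∅ : Finset (Fin n)) x = 1 := Finset.prod_empty

lemma symmDiff_empty' (T : Finset (Fin n)) : T ∆ (∅ : Finset (Fin n)) = T := by
  rw [← Finset.bot_eq_empty, symmDiff_bot]

lemma empty_symmDiff' (T : Finset (Fin n)) : (∅ : Finset (Fin n)) ∆ T = T := by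
  rw [← Finset.bot_eq_empty, bot_symmDiff]


lemma card_symmDiff_mem {T : Finset (Fin n)} {i : Fin n} (h : i ∈ T) :
    (T ∆ ({i} : Finset (Fin n))).card = T.card - 1 := by
  rw [symmDiff_singleton_mem h, Finset.card_erase_of_mem h]

lemma card_symmDiff_notMem {T : Finset (Fin n)} {i : Fin n} (h : i ∉ T) :
    (T ∆ ({i} : Finset (Fin n))).card = T.card + 1 := by
  rw [symmDiff_singleton_not_mem h, Finset.card_insert_of_notMem h]

lemma sum_P_symmDiff (k : ℕ) (T : Finset (Fin n)) :
    ∑ i : Fin n, P n k ((T ∆ {i}).card) = P n (k+1) T.card := by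
  rw [← Finset.sum_filter_add_sum_filter_not Finset.univ (· ∈ T)]
  have h1 : Finset.univ.filter (· ∈ T) = T := by ext j; simp
  have h2 : Finset.univ.filter (fun i => ¬ i ∈ T) = Tᶜ := by ext j; simp
  rw [h1, h2]
  have e1 : ∑ i ∈ T, P n k ((T ∆ {i}).card) = ∑ _i ∈ T, P n k (T.card - 1) :=
    Finset.sum_congr rfl fun i hi => by rw [card_symmDiff_mem hi]
  have e2 : ∑ i ∈ Tᶜ, P n k ((T ∆ {i}).card) = ∑ _i ∈ Tᶜ, P n k (T.card + 1) :=
    Finset.sum_congr rfl fun i hi => by rw [card_symmDiff_notMem (Finset.mem_compl.mp hi)]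
  rw [e1, e2, Finset.sum_const, Finset.sum_const, Finset.card_compl, P_succ]
  have hle : T.card ≤ n := by
    simpa using Finset.card_le_card (Finset.subset_univ T)
  rw [Fintype.card_fin]
  rw [nsmul_eq_mul, nsmul_eq_mul, Nat.cast_sub hle]

lemma uu_odd (hn : 0 < n) {C : Finset (Fin n → ZMod 2)} (hsc : ∀ x ∈ C, x + 1 ∈ C)
    {S : Finset (Fin n)} (hS : Odd S.card) : uu C S = 0 := by
  unfold uu
  have hchi : ∀ x : Fin n → ZMod 2, chi S (x + 1) = - chi S x := by
    intro x
    unfold chi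
    have h1 : ∀ i ∈ S, sgn ((x + 1) i) = (-1) * sgn (x i) := by
      intro i _
      have : (x + 1) i = x i + 1 := rfl
      rw [this, sgn_add_one]; ring
    rw [Finset.prod_congr rfl h1, Finset.prod_mul_distrib, Finset.prod_const, hS.neg_one_pow]
    ring
  apply Finset.sum_involution (g := fun x _ => x + 1)
  · intro x hx
    rw [hchi x]; ring
  · intro x hx _
    intro hcontra
    have h0 : (x + 1) ⟨0, hn⟩ = x ⟨0, hn⟩ := by rw [hcontra]
    have : ∀ u : ZMod 2, u + 1 ≠ u := by decide
    exact this _ h0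
  · intro x hx
    funext i
    show x i + 1 + 1 = x i
    have : ∀ u : ZMod 2, u + 1 + 1 = u := by decide
    exact this _
  · intro x hx; exact hsc x hx


lemma master (C : Finset (Fin n → ZMod 2)) :
    ∀ (k : ℕ) (S : Finset (Fin n)),
      ∑ x ∈ C, ∑ y ∈ C, ip x y ^ k * (chi S x * chi S y)
        = ∑ T : Finset (Fin n), P n k T.card * uu C (T ∆ S) ^ 2 := by
  intro k
  induction k with
  | zero =>
    intro S
    simp only [pow_zero, one_mul]
    have hL : ∑ x ∈ C, ∑ y ∈ C, chi S x * chi S y = uu C S ^ 2 := by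
      rw [sq, uu, Finset.sum_mul_sum]
    rw [hL, Finset.sum_eq_single (∅ : Finset (Fin n))]
    · rw [empty_symmDiff']
      simp [P_zero]
    · intro T _ hT
      have : T.card ≠ 0 := fun h => hT (Finset.card_eq_zero.mp h)
      simp [P_zero, this]
    · intro h
      exact absurd (Finset.mem_univ _) h
  | succ k ih =>
    intro S
    have hterm : ∀ x y : Fin n → ZMod 2,
        ip x y ^ (k+1) * (chi S x * chi S y)
          = ∑ i : Fin n, ip x y ^ k * (chi (S ∆ {i}) x * chi (S ∆ {i}) y) := by
      intro x y
      have h1 : ∀ i : Fin n, chi (S ∆ {i}) x * chi (S ∆ {i}) y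
          = (chi S x * sgn (x i)) * (chi S y * sgn (y i)) := by
        intro i
        rw [chi_symmDiff_singleton, chi_symmDiff_singleton]
      rw [Finset.sum_congr rfl fun i _ => by rw [h1 i]]
      rw [pow_succ, ip, Finset.mul_sum, Finset.sum_mul]
      exact Finset.sum_congr rfl fun i _ => by ring
    calc ∑ x ∈ C, ∑ y ∈ C, ip x y ^ (k+1) * (chi S x * chi S y)
        = ∑ x ∈ C, ∑ y ∈ C, ∑ i : Fin n,
            ip x y ^ k * (chi (S ∆ {i}) x * chi (S ∆ {i}) y) :=
          Finset.sum_congr rfl fun x _ => Finset.sum_congr rfl fun y _ => hterm x y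
      _ = ∑ x ∈ C, ∑ i : Fin n, ∑ y ∈ C,
            ip x y ^ k * (chi (S ∆ {i}) x * chi (S ∆ {i}) y) :=
          Finset.sum_congr rfl fun x _ => Finset.sum_comm
      _ = ∑ i : Fin n, ∑ x ∈ C, ∑ y ∈ C,
            ip x y ^ k * (chi (S ∆ {i}) x * chi (S ∆ {i}) y) := Finset.sum_comm
      _ = ∑ i : Fin n, ∑ T : Finset (Fin n), P n k T.card * uu C (T ∆ (S ∆ {i})) ^ 2 :=
          Finset.sum_congr rfl fun i _ => ih (S ∆ {i})
      _ = ∑ i : Fin n, ∑ T : Finset (Fin n), P n k ((T ∆ {i}).card) * uu C (T ∆ S) ^ 2 := by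
          refine Finset.sum_congr rfl fun i _ => ?_
          have hinv : Function.Involutive (fun T : Finset (Fin n) => T ∆ {i}) :=
            fun T => symmDiff_symmDiff_cancel_right {i} T
          refine Fintype.sum_equiv hinv.toPerm _ _ fun T => ?_
          have hc : (T ∆ {i}) ∆ {i} = T := hinv T
          have hs : (T ∆ {i}) ∆ S = T ∆ (S ∆ {i}) := by
            rw [symmDiff_assoc, symmDiff_comm ({i} : Finset (Fin n)) S]
          simp only [Function.Involutive.coe_toPerm, hc, hs]
      _ = ∑ T : Finset (Fin n), (∑ i : Fin n, P n k ((T ∆ {i}).card)) * uu C (T ∆ S) ^ 2 := by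
          rw [Finset.sum_comm]
          exact Finset.sum_congr rfl fun T _ => (Finset.sum_mul _ _ _).symm
      _ = ∑ T : Finset (Fin n), P n (k+1) T.card * uu C (T ∆ S) ^ 2 :=
          Finset.sum_congr rfl fun T _ => by rw [sum_P_symmDiff]


lemma P1val (t : ℕ) : P n 1 t = if t = 1 then 1 else 0 := by
  rw [show (1:ℕ) = 0 + 1 from rfl, P_succ]
  rcases t with _ | _ | t <;> simp [P_zero]

lemma P2val (t : ℕ) : P n 2 t = if t = 0 then (n:ℤ) else if t = 2 then 2 else 0 := by
  rw [show (2:ℕ) = 1 + 1 from rfl, P_succ, P1val, P1val]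
  rcases t with _ | _ | _ | t <;> simp <;> ring

lemma P3val (t : ℕ) :
    P n 3 t = if t = 1 then 3*(n:ℤ) - 2 else if t = 3 then 6 else 0 := by
  rw [show (3:ℕ) = 2 + 1 from rfl, P_succ, P2val, P2val]
  rcases t with _ | _ | _ | _ | t <;> simp <;> push_cast <;> ring

lemma P4val (t : ℕ) :
    P n 4 t = if t = 0 then 3*(n:ℤ)^2 - 2*n
      else if t = 2 then 12*(n:ℤ) - 16 else if t = 4 then 24 else 0 := by
  rw [show (4:ℕ) = 3 + 1 from rfl, P_succ, P3val, P3val]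
  rcases t with _ | _ | _ | _ | _ | t <;> simp <;> push_cast <;> ring

lemma P5val (t : ℕ) :
    P n 5 t = if t = 1 then 15*(n:ℤ)^2 - 30*n + 16
      else if t = 3 then 60*(n:ℤ) - 120 else if t = 5 then 120 else 0 := by
  rw [show (5:ℕ) = 4 + 1 from rfl, P_succ, P4val, P4val]
  rcases t with _ | _ | _ | _ | _ | _ | t <;> simp <;> push_cast <;> ring

lemma P6val (t : ℕ) :
    P n 6 t = if t = 0 then 15*(n:ℤ)^3 - 30*(n:ℤ)^2 + 16*n
      else if t = 2 then 90*(n:ℤ)^2 - 300*n + 272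
      else if t = 4 then 360*(n:ℤ) - 960 else if t = 6 then 720 else 0 := by
  rw [show (6:ℕ) = 5 + 1 from rfl, P_succ, P5val, P5val]
  rcases t with _ | _ | _ | _ | _ | _ | _ | t <;> simp <;> push_cast <;> ring


lemma ip_eq (x y : Fin n → ZMod 2) : ip x y = (n:ℤ) - 2 * hammingDist x y := by
  unfold ip
  rw [Finset.sum_congr rfl fun i _ => sgn_mul (x i) (y i), Finset.sum_ite,
    Finset.sum_const, Finset.sum_const]
  have hcard : (Finset.univ.filter fun i => x i = y i).card
      + (Finset.univ.filter fun i => ¬ x i = y i).card = n := by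
    rw [Finset.card_filter_add_card_filter_not]
    simp
  have hd : hammingDist x y = (Finset.univ.filter fun i => ¬ x i = y i).card := rfl
  rw [hd, nsmul_eq_mul, nsmul_eq_mul]
  omega

lemma ip_self (x : Fin n → ZMod 2) : ip x x = n := by
  unfold ip
  rw [Finset.sum_congr rfl fun i _ => sgn_sq (x i)]
  simp

lemma ip_add_one (x : Fin n → ZMod 2) : ip x (x + 1) = -(n:ℤ) := by
  unfold ip
  have h : ∀ i : Fin n, sgn (x i) * sgn ((x + 1) i) = -1 := by
    intro i
    have : (x + 1) i = x i + 1 := rfl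
    rw [this, sgn_add_one, mul_neg, sgn_sq]
  rw [Finset.sum_congr rfl fun i _ => h i]
  simp

lemma hammingDist_le (x y : Fin n → ZMod 2) : hammingDist x y ≤ n := by
  have : hammingDist x y ≤ Fintype.card (Fin n) := by
    exact (Finset.card_filter_le _ _).trans (by simp)
  simpa using this

lemma eq_add_one_of_dist_eq (x y : Fin n → ZMod 2) (h : hammingDist x y = n) : y = x + 1 := by
  have huniv : (Finset.univ.filter fun i => x i ≠ y i) = Finset.univ := by
    apply Finset.eq_univ_of_card
    rw [show ((Finset.univ.filter fun i => x i ≠ y i)).card = hammingDist x y from rfl, h]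
    simp
  funext i
  have hi : x i ≠ y i := by
    have := Finset.mem_univ i
    rw [← huniv, Finset.mem_filter] at this
    exact this.2
  show y i = x i + 1
  revert hi
  generalize x i = u; generalize y i = v
  revert u v; decide

lemma dist_add_one (x y : Fin n → ZMod 2) :
    hammingDist x (y + 1) + hammingDist x y = n := by
  have h1 : (Finset.univ.filter fun i => x i ≠ (y + 1) i)
      = (Finset.univ.filter fun i => x i = y i) := by
    ext i
    simp only [Finset.mem_filter, Finset.mem_univ, true_and]
    have : (y + 1) i = y i + 1 := rfl
    rw [this]
    generalize x i = u; generalize y i = v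
    revert u v; decide
  show (Finset.univ.filter fun i => x i ≠ (y+1) i).card
      + (Finset.univ.filter fun i => x i ≠ y i).card = n
  rw [h1]
  rw [Finset.card_filter_add_card_filter_not (p := fun i => x i = y i)]
  simp

lemma uu_empty (C : Finset (Fin n → ZMod 2)) : uu C (∅ : Finset (Fin n)) = C.card := by
  unfold uu
  rw [Finset.sum_congr rfl fun x _ => chi_empty x]
  simp


end Stmt19

open Stmt19

set_option maxHeartbeats 2000000 in
theorem stmt_19 (n a b : ℕ) (hae : Even a) (hbe : Even b)
    (ha : 0 < a) (hab : a < b) (hb : b < n / 2)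
    (C : Finset (Fin n → ZMod 2))
    (hsc : ∀ x ∈ C, x + 1 ∈ C)
    (hdist : {i : ℕ | ∃ x ∈ C, ∃ y ∈ C, x ≠ y ∧ hammingDist x y = i} =
      {n / 2 - b, n / 2 - a, n / 2, n / 2 + a, n / 2 + b, n})
    (hpos : (0 : ℤ) < 15 * (n : ℤ) ^ 2 - 30 * n + 16
        - 4 * (3 * (n : ℤ) - 2) * ((a : ℤ) ^ 2 + (b : ℤ) ^ 2)
        + 16 * (a : ℤ) ^ 2 * (b : ℤ) ^ 2)
    (hpos' : (0 : ℤ) ≤ 5 * ((n : ℤ) - 2) - 2 * (a : ℤ) ^ 2 - 2 * (b : ℤ) ^ 2) :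
    (C.card : ℤ) * (15 * (n : ℤ) ^ 2 - 30 * n + 16
        - 4 * (3 * (n : ℤ) - 2) * ((a : ℤ) ^ 2 + (b : ℤ) ^ 2)
        + 16 * (a : ℤ) ^ 2 * (b : ℤ) ^ 2) ≤
      2 * (n : ℤ) * ((n : ℤ) ^ 2 - 4 * (a : ℤ) ^ 2) * ((n : ℤ) ^ 2 - 4 * (b : ℤ) ^ 2) := by
  have hae' : a % 2 = 0 := Nat.even_iff.mp hae
  have hbe' : b % 2 = 0 := Nat.even_iff.mp hbe
  have hn10 : 10 ≤ n := by omega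
  have hn0 : 0 < n := by omega
  -- every occurring distance is in the list
  have hfwd : ∀ x ∈ C, ∀ y ∈ C, x ≠ y →
      (hammingDist x y = n/2 - b ∨ hammingDist x y = n/2 - a ∨ hammingDist x y = n/2 ∨
       hammingDist x y = n/2 + a ∨ hammingDist x y = n/2 + b ∨ hammingDist x y = n) := by
    intro x hx y hy hxy
    have hmem : hammingDist x y ∈ {i : ℕ | ∃ x ∈ C, ∃ y ∈ C, x ≠ y ∧ hammingDist x y = i} :=
      ⟨x, hx, y, hy, hxy, rfl⟩
    rw [hdist] at hmem
    simpa using hmem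
  -- each listed distance occurs
  have hback : ∀ i ∈ ({n / 2 - b, n / 2 - a, n / 2, n / 2 + a, n / 2 + b, n} : Set ℕ),
      ∃ x ∈ C, ∃ y ∈ C, x ≠ y ∧ hammingDist x y = i := by
    intro i hi
    rw [← hdist] at hi
    exact hi
  -- C is nonempty
  have hCne : C.Nonempty := by
    obtain ⟨x, hx, -⟩ := hback n (by simp)
    exact ⟨x, hx⟩
  have hM1 : 1 ≤ (C.card : ℤ) := by
    have := Finset.card_pos.mpr hCne
    exact_mod_cast this
  -- n is even
  have hneven : n % 2 = 0 := by
    by_contra hodd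
    obtain ⟨x, hx, y, hy, hxy, hd⟩ := hback (n/2) (by simp)
    have hxy1 : x ≠ y + 1 := by
      intro he
      have h1 := dist_add_one y y
      rw [hammingDist_self] at h1
      have h2 : hammingDist (y+1) y = n := by
        rw [hammingDist_comm]; omega
      rw [he, h2] at hd
      omega
    have h3 := dist_add_one x y
    have h4 := hfwd x hx (y+1) (hsc y hy) hxy1
    omega
  -- vanishing of the polynomial off the diagonal and off complements
  have hvanish : ∀ x ∈ C, ∀ y ∈ C, y ≠ x → y ≠ x + 1 →
      ip x y ^ 2 * (ip x y ^ 2 - 4*(a:ℤ)^2) * (ip x y ^ 2 - 4*(b:ℤ)^2) = 0 := by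
    intro x hx y hy hyx hyx1
    have hd := hfwd x hx y hy (fun h => hyx h.symm)
    have hdn : hammingDist x y ≠ n := fun h => hyx1 (eq_add_one_of_dist_eq x y h)
    have hip := ip_eq x y
    rcases hd with h | h | h | h | h | h
    · have hs : ip x y = 2*(b:ℤ) := by rw [hip, h]; omega
      rw [hs]; ring
    · have hs : ip x y = 2*(a:ℤ) := by rw [hip, h]; omega
      rw [hs]; ring
    · have hs : ip x y = 0 := by rw [hip, h]; omega
      rw [hs]; ring
    · have hs : ip x y = -(2*(a:ℤ)) := by rw [hip, h]; omega
      rw [hs]; ring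
    · have hs : ip x y = -(2*(b:ℤ)) := by rw [hip, h]; omega
      rw [hs]; ring
    · exact absurd h hdn
  -- row sums
  have hrow : ∀ x ∈ C,
      ∑ y ∈ C, ip x y ^ 2 * (ip x y ^ 2 - 4*(a:ℤ)^2) * (ip x y ^ 2 - 4*(b:ℤ)^2)
        = 2 * (n:ℤ)^2 * ((n:ℤ)^2 - 4*(a:ℤ)^2) * ((n:ℤ)^2 - 4*(b:ℤ)^2) := by
    intro x hx
    have hx1 : x + 1 ∈ C := hsc x hx
    have hx1ne : x + 1 ≠ x := by
      intro he
      have h0 := congrFun he ⟨0, hn0⟩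
      have : ∀ u : ZMod 2, u + 1 ≠ u := by decide
      exact this _ h0
    rw [← Finset.add_sum_erase C _ hx]
    have herase : ∑ y ∈ C.erase x,
        ip x y ^ 2 * (ip x y ^ 2 - 4*(a:ℤ)^2) * (ip x y ^ 2 - 4*(b:ℤ)^2)
          = ip x (x+1) ^ 2 * (ip x (x+1) ^ 2 - 4*(a:ℤ)^2) * (ip x (x+1) ^ 2 - 4*(b:ℤ)^2) := by
      apply Finset.sum_eq_single_of_mem
      · exact Finset.mem_erase.mpr ⟨hx1ne, hx1⟩
      · intro y hy hyne
        obtain ⟨hyx, hyC⟩ := Finset.mem_erase.mp hy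
        exact hvanish x hx y hyC hyx hyne
    rw [herase, ip_self, ip_add_one]
    ring
  have htotal : ∑ x ∈ C, ∑ y ∈ C,
      ip x y ^ 2 * (ip x y ^ 2 - 4*(a:ℤ)^2) * (ip x y ^ 2 - 4*(b:ℤ)^2)
        = (C.card : ℤ) * (2 * (n:ℤ)^2 * ((n:ℤ)^2 - 4*(a:ℤ)^2) * ((n:ℤ)^2 - 4*(b:ℤ)^2)) := by
    rw [Finset.sum_congr rfl hrow, Finset.sum_const, nsmul_eq_mul]
  -- moments via the master identity
  have hm : ∀ k : ℕ, ∑ x ∈ C, ∑ y ∈ C, ip x y ^ k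
      = ∑ T : Finset (Fin n), P n k T.card * uu C T ^ 2 := by
    intro k
    have h := master C k ∅
    simpa [chi_empty, symmDiff_empty'] using h
  -- combine the three moments
  have hR : ∑ x ∈ C, ∑ y ∈ C,
      ip x y ^ 2 * (ip x y ^ 2 - 4*(a:ℤ)^2) * (ip x y ^ 2 - 4*(b:ℤ)^2)
      = (∑ x ∈ C, ∑ y ∈ C, ip x y ^ 6)
        - 4*((a:ℤ)^2+(b:ℤ)^2) * (∑ x ∈ C, ∑ y ∈ C, ip x y ^ 4)
        + 16*(a:ℤ)^2*(b:ℤ)^2 * (∑ x ∈ C, ∑ y ∈ C, ip x y ^ 2) := by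
    rw [Finset.mul_sum, Finset.mul_sum, ← Finset.sum_sub_distrib, ← Finset.sum_add_distrib]
    refine Finset.sum_congr rfl fun x _ => ?_
    rw [Finset.mul_sum, Finset.mul_sum, ← Finset.sum_sub_distrib, ← Finset.sum_add_distrib]
    exact Finset.sum_congr rfl fun y _ => by ring
  have hL : ∑ T : Finset (Fin n),
      (P n 6 T.card - 4*((a:ℤ)^2+(b:ℤ)^2) * P n 4 T.card
        + 16*(a:ℤ)^2*(b:ℤ)^2 * P n 2 T.card) * uu C T ^ 2
      = (∑ T : Finset (Fin n), P n 6 T.card * uu C T ^ 2)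
        - 4*((a:ℤ)^2+(b:ℤ)^2) * (∑ T : Finset (Fin n), P n 4 T.card * uu C T ^ 2)
        + 16*(a:ℤ)^2*(b:ℤ)^2 * (∑ T : Finset (Fin n), P n 2 T.card * uu C T ^ 2) := by
    rw [Finset.mul_sum, Finset.mul_sum, ← Finset.sum_sub_distrib, ← Finset.sum_add_distrib]
    exact Finset.sum_congr rfl fun T _ => by ring
  have hcomb : ∑ T : Finset (Fin n),
      (P n 6 T.card - 4*((a:ℤ)^2+(b:ℤ)^2) * P n 4 T.card
        + 16*(a:ℤ)^2*(b:ℤ)^2 * P n 2 T.card) * uu C T ^ 2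
      = (C.card : ℤ) * (2 * (n:ℤ)^2 * ((n:ℤ)^2 - 4*(a:ℤ)^2) * ((n:ℤ)^2 - 4*(b:ℤ)^2)) := by
    rw [hL, ← hm 6, ← hm 4, ← hm 2, ← hR, htotal]
  -- split off the empty set
  have hsplit := (Finset.add_sum_erase Finset.univ
    (fun T : Finset (Fin n) =>
      (P n 6 T.card - 4*((a:ℤ)^2+(b:ℤ)^2) * P n 4 T.card
        + 16*(a:ℤ)^2*(b:ℤ)^2 * P n 2 T.card) * uu C T ^ 2)
    (Finset.mem_univ (∅ : Finset (Fin n)))).symm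
  have hempty : (P n 6 (∅ : Finset (Fin n)).card
      - 4*((a:ℤ)^2+(b:ℤ)^2) * P n 4 (∅ : Finset (Fin n)).card
      + 16*(a:ℤ)^2*(b:ℤ)^2 * P n 2 (∅ : Finset (Fin n)).card) * uu C (∅ : Finset (Fin n)) ^ 2
      = (n:ℤ) * (15 * (n : ℤ) ^ 2 - 30 * n + 16
        - 4 * (3 * (n : ℤ) - 2) * ((a : ℤ) ^ 2 + (b : ℤ) ^ 2)
        + 16 * (a : ℤ) ^ 2 * (b : ℤ) ^ 2) * (C.card : ℤ)^2 := by
    rw [Finset.card_empty, P6val, P4val, P2val, uu_empty, if_pos rfl, if_pos rfl, if_pos rfl]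
    ring
  have hrest : 0 ≤ ∑ T ∈ Finset.univ.erase (∅ : Finset (Fin n)),
      (P n 6 T.card - 4*((a:ℤ)^2+(b:ℤ)^2) * P n 4 T.card
        + 16*(a:ℤ)^2*(b:ℤ)^2 * P n 2 T.card) * uu C T ^ 2 := by
    apply Finset.sum_nonneg
    intro T hT
    obtain ⟨hTne, -⟩ := Finset.mem_erase.mp hT
    by_cases hodd : Odd T.card
    · rw [uu_odd hn0 hsc hodd]
      simp
    · have heven : T.card % 2 = 0 := Nat.even_iff.mp (Nat.not_odd_iff_even.mp hodd)
      have hne0 : T.card ≠ 0 := fun h => hTne (Finset.card_eq_zero.mp h)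
      have hn10' : (10:ℤ) ≤ (n:ℤ) := by exact_mod_cast hn10
      apply mul_nonneg _ (sq_nonneg _)
      rw [P6val, P4val, P2val]
      have hcase : T.card = 2 ∨ T.card = 4 ∨ T.card = 6 ∨ 6 < T.card := by omega
      rcases hcase with h|h|h|h
      · rw [h]
        norm_num
        nlinarith [hpos, mul_nonneg (show (0:ℤ) ≤ (n:ℤ) - 2 from by linarith) hpos']
      · rw [h]
        norm_num
        linarith
      · rw [h]
        norm_num
      · have h0 : T.card ≠ 0 := by omega
        have h2 : T.card ≠ 2 := by omega
        have h4 : T.card ≠ 4 := by omega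
        have h6 : T.card ≠ 6 := by omega
        simp [h0, h2, h4, h6]
  -- final arithmetic
  have hkey : (n:ℤ) * (15 * (n : ℤ) ^ 2 - 30 * n + 16
        - 4 * (3 * (n : ℤ) - 2) * ((a : ℤ) ^ 2 + (b : ℤ) ^ 2)
        + 16 * (a : ℤ) ^ 2 * (b : ℤ) ^ 2) * (C.card : ℤ)^2
      ≤ (C.card : ℤ) * (2 * (n:ℤ)^2 * ((n:ℤ)^2 - 4*(a:ℤ)^2) * ((n:ℤ)^2 - 4*(b:ℤ)^2)) := by
    rw [← hcomb, hsplit, hempty]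
    linarith [hrest]
  have hnM : (0:ℤ) < (n:ℤ) * (C.card : ℤ) := by
    have : (0:ℤ) < (n:ℤ) := by exact_mod_cast hn0
    nlinarith
  refine le_of_mul_le_mul_left ?_ hnM
  nlinarith [hkey]
end
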